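/- arXiv:2103.00307 — 9 statements merged into one kernel-verified Lean document; each statement's English description precedes it below -/
import Mathlib

section
/- Let m > 1 be an odd integer divisible by 3, and let E_m be the elliptic curve over ℚ defined by y² = x³ - x + m⁶. Then the three rational points P = (0, m³), Q = (-1, m³), and R = (-m², m) on E_m are linearly independent over ℤ in the Mordell–Weil group E_m(ℚ); in particular, the rank of E_m(ℚ) is at least 3. -/
/-- The elliptic curve `E_m : y² = x³ - x + m⁶` over `ℚ`. -/
def Em (m : ℤ) : WeierstrassCurve ℚ := ⟨0, 0, 0, -1, (m : ℚ) ^ 6⟩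

/-!
Let `θ` be a root of `f = X³ - X + m⁶`, irreducible over `ℚ` because `m` is odd, and `K = ℚ(θ)`.
The 2-descent map `(x, y) ↦ x - θ` is a homomorphism `E_m(ℚ) → K^×/K^×²`, and `E_m(ℚ)` has no
2-torsion. So if no product of a nonempty subset of `-θ`, `-1 - θ`, `-m² - θ` is a square in `K`,
every relation `aP + bQ + cR = 0` has even coefficients, and halving it gives a relation with smaller
coefficients: only the trivial relation survives.

A square root of `η = c₀ + c₁θ + c₂θ²` can be written `(a + bθ + cθ²)/d` with integers `a, b, c, d`,
and `η` is excluded by infinite descent on `d`. As `3⁶ ∣ m⁶`, `f` has three 3-adic roots, congruent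
to `0`, `1`, `-1` modulo `3⁶` (the first even to `m⁶` modulo `m¹⁸`); at one of them `η` is not a
3-adic square, which forces `3` to divide `a, b, c, d`. For `θ(θ + m²)`, a square at every 3-adic
root, the obstruction is 2-adic instead, checked modulo `8`.
-/

open Polynomial

abbrev ModSquares (G : Type*) [CommGroup G] := G ⧸ (powMonoidHom 2 : G →* G).range

namespace ModSquares

lemma sq_eq_one {G : Type*} [CommGroup G] (g : ModSquares G) : g ^ 2 = 1 := by
  induction g using QuotientGroup.induction_on with
  | H u => rw [← QuotientGroup.mk_pow, QuotientGroup.eq_one_iff]; exact ⟨u, rfl⟩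

lemma inv_eq {G : Type*} [CommGroup G] (g : ModSquares G) : g⁻¹ = g :=
  inv_eq_of_mul_eq_one_right (by rw [← sq, sq_eq_one])

lemma mk_eq_one_iff {K : Type*} [Field K] (u : Kˣ) :
    (u : ModSquares Kˣ) = 1 ↔ IsSquare (u : K) := by
  rw [QuotientGroup.eq_one_iff]
  constructor
  · rintro ⟨v, rfl⟩
    exact ⟨v, by simp [sq]⟩
  · rintro ⟨r, hr⟩
    have hr0 : r ≠ 0 := by rintro rfl; simp at hr
    exact ⟨Units.mk0 r hr0, Units.ext (by simp [hr, sq])⟩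

end ModSquares

namespace WeierstrassCurve

open Affine.Point

variable {F : Type*} [Field F] (W : WeierstrassCurve F)

noncomputable def rhsPoly : F[X] := X ^ 3 + C W.a₂ * X ^ 2 + C W.a₄ * X + C W.a₆

lemma natDegree_rhsPoly : W.rhsPoly.natDegree = 3 := by
  unfold rhsPoly; compute_degree!

lemma monic_rhsPoly : W.rhsPoly.Monic := by
  unfold rhsPoly; monicity!

variable {W}

lemma equation_iff_rhsPoly [W.IsCharNeTwoNF] {x y : F} :
    W.toAffine.Equation x y ↔ y ^ 2 = W.rhsPoly.eval x := by
  rw [Affine.equation_iff]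
  simp [rhsPoly]

lemma addPolynomial_eq_sq_sub_rhsPoly [W.IsCharNeTwoNF] (x y ℓ : F) :
    W.toAffine.addPolynomial x y ℓ = Affine.linePolynomial x y ℓ ^ 2 - W.rhsPoly := by
  rw [Affine.addPolynomial, Affine.polynomial]
  simp [rhsPoly]

lemma isSquare_mul_mul_algebraMap_sub_root [DecidableEq F] [W.IsCharNeTwoNF] {x₁ x₂ y₁ y₂ : F}
    (h₁ : W.toAffine.Equation x₁ y₁) (h₂ : W.toAffine.Equation x₂ y₂)
    (hxy : ¬(x₁ = x₂ ∧ y₁ = W.toAffine.negY x₂ y₂)) :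
    IsSquare ((algebraMap F (AdjoinRoot W.rhsPoly) x₁ - AdjoinRoot.root W.rhsPoly) *
      (algebraMap F _ x₂ - AdjoinRoot.root W.rhsPoly) *
      (algebraMap F _ (W.toAffine.addX x₁ x₂ (W.toAffine.slope x₁ x₂ y₁ y₂)) -
        AdjoinRoot.root W.rhsPoly)) := by
  have key := congrArg (aeval (AdjoinRoot.root W.rhsPoly)) (Affine.addPolynomial_slope h₁ h₂ hxy)
  simp only [addPolynomial_eq_sq_sub_rhsPoly, map_sub, map_pow, AdjoinRoot.aeval_eq,
    AdjoinRoot.mk_self, sub_zero] at key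
  refine ⟨_, Eq.trans ?_ ((pow_two _).symm.trans key).symm⟩
  simp only [map_neg, map_mul, map_sub, AdjoinRoot.mk_X, AdjoinRoot.mk_C, AdjoinRoot.algebraMap_eq]
  ring

lemma eq_zero_of_add_mul_root_add_mul_root_sq_eq_zero {u v w : F}
    (h : algebraMap F (AdjoinRoot W.rhsPoly) u + algebraMap F _ v * AdjoinRoot.root W.rhsPoly +
      algebraMap F _ w * AdjoinRoot.root W.rhsPoly ^ 2 = 0) :
    u = 0 ∧ v = 0 ∧ w = 0 := by
  have hdvd : W.rhsPoly ∣ C u + C v * X + C w * X ^ 2 := by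
    rw [← AdjoinRoot.mk_eq_zero, ← h]
    simp [AdjoinRoot.algebraMap_eq]
  have hzero := eq_zero_of_dvd_of_natDegree_lt hdvd (by rw [natDegree_rhsPoly]; compute_degree!)
  refine ⟨?_, ?_, ?_⟩
  · simpa using congrArg (coeff · 0) hzero
  · simpa using congrArg (coeff · 1) hzero
  · simpa using congrArg (coeff · 2) hzero

lemma exists_int_mul_eq {W : WeierstrassCurve ℚ} (z : AdjoinRoot W.rhsPoly) :
    ∃ a b c d : ℤ, d ≠ 0 ∧ (d : AdjoinRoot W.rhsPoly) * z =
      a + b * AdjoinRoot.root W.rhsPoly + c * AdjoinRoot.root W.rhsPoly ^ 2 := by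
  obtain ⟨p, rfl⟩ := AdjoinRoot.mk_surjective z
  obtain ⟨r, hr, hpr⟩ : ∃ r : ℚ[X], r.natDegree < 3 ∧ AdjoinRoot.mk _ r = AdjoinRoot.mk _ p := by
    have h1 : W.rhsPoly ≠ 1 := fun h ↦ by simpa [h] using natDegree_rhsPoly W
    refine ⟨p %ₘ W.rhsPoly, ?_, ?_⟩
    · simpa [natDegree_rhsPoly] using natDegree_modByMonic_lt p W.monic_rhsPoly h1
    · rw [← AdjoinRoot.modByMonicHom_mk W.monic_rhsPoly, AdjoinRoot.mk_leftInverse]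
  have hp : AdjoinRoot.mk _ p = AdjoinRoot.mk W.rhsPoly
      (C (r.coeff 0) + C (r.coeff 1) * X + C (r.coeff 2) * X ^ 2) := by
    rw [← hpr, as_sum_range' r 3 hr]
    simp [Finset.sum_range_succ, ← C_mul_X_pow_eq_monomial]
  set q₀ := r.coeff 0
  set q₁ := r.coeff 1
  set q₂ := r.coeff 2
  refine ⟨q₀.num * q₁.den * q₂.den, q₀.den * q₁.num * q₂.den, q₀.den * q₁.den * q₂.num,
    q₀.den * q₁.den * q₂.den, by positivity, ?_⟩
  have h₀ := congrArg (algebraMap ℚ (AdjoinRoot W.rhsPoly)) (Rat.mul_den_eq_num q₀)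
  have h₁ := congrArg (algebraMap ℚ (AdjoinRoot W.rhsPoly)) (Rat.mul_den_eq_num q₁)
  have h₂ := congrArg (algebraMap ℚ (AdjoinRoot W.rhsPoly)) (Rat.mul_den_eq_num q₂)
  simp only [map_mul, map_natCast, map_intCast] at h₀ h₁ h₂
  rw [hp]
  simp only [map_add, map_mul, map_pow, AdjoinRoot.mk_C, AdjoinRoot.mk_X,
    ← AdjoinRoot.algebraMap_eq]
  push_cast
  rw [← h₀, ← h₁, ← h₂]
  ring

variable [Fact (Irreducible W.rhsPoly)]

lemma rhsPoly_eval_ne_zero (x : F) : W.rhsPoly.eval x ≠ 0 := by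
  intro h
  have := degree_eq_one_of_irreducible_of_root (Fact.out : Irreducible W.rhsPoly) h
  rw [degree_eq_natDegree W.monic_rhsPoly.ne_zero, natDegree_rhsPoly] at this
  exact absurd this (by decide)

lemma algebraMap_sub_root_ne_zero (x : F) :
    algebraMap F (AdjoinRoot W.rhsPoly) x - AdjoinRoot.root W.rhsPoly ≠ 0 := by
  intro h
  have := AdjoinRoot.eval₂_root W.rhsPoly
  rw [← sub_eq_zero.1 h, ← AdjoinRoot.algebraMap_eq, eval₂_at_apply, map_eq_zero] at this
  exact rhsPoly_eval_ne_zero x this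

variable (W) in
noncomputable def xSubRoot (x : F) : (AdjoinRoot W.rhsPoly)ˣ :=
  Units.mk0 _ (algebraMap_sub_root_ne_zero x)

variable [W.IsCharNeTwoNF] [DecidableEq F]

lemma eq_zero_of_two_nsmul_eq_zero [NeZero (2 : F)] {T : W.toAffine.Point} (hT : 2 • T = 0) :
    T = 0 := by
  rcases T with _ | @⟨x, y, h⟩
  · rfl
  rw [two_nsmul, add_eq_zero_iff_eq_neg, neg_some, some.injEq] at hT
  have hy : 2 * y = 0 := by
    linear_combination (by simpa [Affine.negY] using hT.2 : y = -y)
  rw [mul_eq_zero, or_iff_right two_ne_zero] at hy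
  exact absurd (equation_iff_rhsPoly.1 h.1) (by simpa [hy, eq_comm] using rhsPoly_eval_ne_zero x)

variable (W) in
noncomputable def twoDescentFun : W.toAffine.Point → ModSquares (AdjoinRoot W.rhsPoly)ˣ
  | .zero => 1
  | .some x _ _ => xSubRoot W x

lemma twoDescentFun_add (P Q : W.toAffine.Point) :
    twoDescentFun W (P + Q) = twoDescentFun W P * twoDescentFun W Q := by
  rcases P with _ | @⟨x₁, y₁, h₁⟩
  · exact (one_mul _).symm
  rcases Q with _ | @⟨x₂, y₂, h₂⟩
  · exact (mul_one _).symm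
  by_cases hxy : x₁ = x₂ ∧ y₁ = W.toAffine.negY x₂ y₂
  · rw [add_of_Y_eq hxy.1 hxy.2]
    show 1 = (xSubRoot W x₁ : ModSquares (AdjoinRoot W.rhsPoly)ˣ) * xSubRoot W x₂
    rw [hxy.1, ← sq, ModSquares.sq_eq_one]
  · rw [add_some hxy]
    show (xSubRoot W _ : ModSquares (AdjoinRoot W.rhsPoly)ˣ) = xSubRoot W x₁ * xSubRoot W x₂
    have h := (ModSquares.mk_eq_one_iff (K := AdjoinRoot W.rhsPoly)
      (xSubRoot W x₁ * xSubRoot W x₂ * xSubRoot W _)).2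
      (isSquare_mul_mul_algebraMap_sub_root h₁.1 h₂.1 hxy)
    rw [QuotientGroup.mk_mul, QuotientGroup.mk_mul] at h
    rw [eq_inv_of_mul_eq_one_right h, ModSquares.inv_eq]

variable (W) in
noncomputable def twoDescent :
    W.toAffine.Point →+ Additive (ModSquares (AdjoinRoot W.rhsPoly)ˣ) :=
  AddMonoidHom.mk' (fun P ↦ .ofMul (twoDescentFun W P)) twoDescentFun_add

@[simp]
lemma toMul_twoDescent_some {x y : F} (h : W.toAffine.Nonsingular x y) :
    (twoDescent W (.some x y h)).toMul = xSubRoot W x :=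
  rfl

end WeierstrassCurve

theorem linearIndependent_int_of_forall_two_dvd {G ι : Type*} [AddCommGroup G] [Fintype ι]
    {v : ι → G} (htors : ∀ T : G, 2 • T = 0 → T = 0)
    (heven : ∀ g : ι → ℤ, ∑ i, g i • v i = 0 → ∀ i, 2 ∣ g i) :
    LinearIndependent ℤ v := by
  have key : ∀ n : ℕ, ∀ g : ι → ℤ, ∑ i, g i • v i = 0 → ∀ i, 2 ^ n ∣ g i := by
    intro n
    induction n with
    | zero => simp
    | succ n ih =>
      intro g hg
      choose g' hg' using heven g hg
      have hg'' : ∑ i, g' i • v i = 0 := htors _ (by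
        rw [Finset.smul_sum, ← hg]
        refine Finset.sum_congr rfl fun i _ ↦ ?_
        rw [hg' i, mul_zsmul, two_zsmul, two_nsmul])
      intro i
      rw [hg' i, pow_succ']
      exact mul_dvd_mul_left 2 (ih g' hg'' i)
  rw [Fintype.linearIndependent_iff]
  intro g hg i
  refine Int.eq_zero_of_dvd_of_natAbs_lt_natAbs (key (g i).natAbs g hg i) ?_
  simpa [Int.natAbs_pow] using Nat.lt_two_pow_self

theorem eq_zero_of_sq_eq_of_forall_dvd {K : Type*} [Field K] [CharZero K] {x η : K} {k : ℤ}
    (hk : 2 ≤ k)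
    (hdvd : ∀ a b c d : ℤ, ((a : K) + b * x + c * x ^ 2) ^ 2 = d ^ 2 * η →
      k ∣ a ∧ k ∣ b ∧ k ∣ c ∧ k ∣ d)
    {a b c d : ℤ} (h : ((a : K) + b * x + c * x ^ 2) ^ 2 = d ^ 2 * η) : d = 0 := by
  have hk0 : (k : K) ≠ 0 := by exact_mod_cast (by omega : k ≠ 0)
  have key : ∀ n : ℕ, ∀ a b c d : ℤ, ((a : K) + b * x + c * x ^ 2) ^ 2 = d ^ 2 * η →
      k ^ n ∣ d := by
    intro n
    induction n with
    | zero => simp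
    | succ n ih =>
      intro a b c d h
      obtain ⟨⟨a, rfl⟩, ⟨b, rfl⟩, ⟨c, rfl⟩, ⟨d, rfl⟩⟩ := hdvd a b c d h
      rw [pow_succ']
      refine mul_dvd_mul_left k (ih a b c d (mul_left_cancel₀ (pow_ne_zero 2 hk0) ?_))
      push_cast at h
      linear_combination h
  refine Int.eq_zero_of_dvd_of_natAbs_lt_natAbs (key d.natAbs a b c d h) ?_
  rw [Int.natAbs_pow]
  calc d.natAbs < 2 ^ d.natAbs := Nat.lt_two_pow_self
    _ ≤ k.natAbs ^ d.natAbs := Nat.pow_le_pow_left (by omega) _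

lemma pow_dvd_of_pow_dvd_sq_sub_mul_sq {p : ℕ} [Fact p.Prime] {v : ℤ}
    (hv : ¬IsSquare (v : ZMod p)) (n : ℕ) {e d : ℤ} (h : (p : ℤ) ^ (2 * n) ∣ e ^ 2 - v * d ^ 2) :
    (p : ℤ) ^ n ∣ d := by
  induction n generalizing e d with
  | zero => simp
  | succ n ih =>
    have hp : (p : ℤ) ∣ e ^ 2 - v * d ^ 2 := (dvd_pow_self _ (by omega)).trans h
    have hd : (p : ℤ) ∣ d := by
      rw [← ZMod.intCast_zmod_eq_zero_iff_dvd] at hp ⊢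
      by_contra hd
      push_cast at hp
      exact hv ⟨e / d, by field_simp; linear_combination -hp⟩
    obtain ⟨d, rfl⟩ := hd
    have hpz : Prime (p : ℤ) := Nat.prime_iff_prime_int.mp Fact.out
    obtain ⟨e, rfl⟩ : (p : ℤ) ∣ e := by
      refine hpz.dvd_of_dvd_pow (n := 2) ?_
      simpa using dvd_add hp (Dvd.intro (v * p * d ^ 2) (by ring) : (p : ℤ) ∣ v * (p * d) ^ 2)
    rw [show (p * e : ℤ) ^ 2 - v * (p * d) ^ 2 = p ^ 2 * (e ^ 2 - v * d ^ 2) by ring,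
      mul_add, mul_one, add_comm, pow_add] at h
    rw [pow_succ']
    exact mul_dvd_mul_left _ (ih ((mul_dvd_mul_iff_left (pow_ne_zero 2 hpz.ne_zero)).1 h))

lemma no_rat_root_of_odd {M : ℤ} (hM : Odd M) (r : ℚ) : r ^ 3 - r + M ≠ 0 := by
  intro h
  obtain ⟨n, rfl⟩ : ∃ n : ℤ, (n : ℚ) = r := by
    obtain ⟨n, hn⟩ := isInteger_of_is_root_of_monic (A := ℤ) (p := X ^ 3 - X + C M) (r := r)
      (by monicity!) (by simpa using h)
    exact ⟨n, hn⟩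
  have hZ := congrArg (Int.cast : ℤ → ZMod 2) (by exact_mod_cast h : n ^ 3 - n + M = 0)
  push_cast [ZMod.intCast_eq_one_iff_odd.2 hM] at hZ
  generalize (n : ZMod 2) = x at hZ
  revert x
  decide

open WeierstrassCurve

namespace Em

section IntegerDescent

variable {m a b c d c₀ c₁ c₂ : ℤ}

/-- Evaluating at `t` with `t³ - t + m⁶` divisible by a high power of `3` approximates the embedding
of `K` into `ℚ₃` at the root of `f` near `t`. -/
lemma sq_sub_eq_mul_eval (E₀ : a ^ 2 - 2 * b * c * m ^ 6 = d ^ 2 * c₀)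
    (E₁ : 2 * a * b + 2 * b * c - c ^ 2 * m ^ 6 = d ^ 2 * c₁)
    (E₂ : b ^ 2 + 2 * a * c + c ^ 2 = d ^ 2 * c₂) (t : ℤ) :
    (a + b * t + c * t ^ 2) ^ 2 - (c₀ + c₁ * t + c₂ * t ^ 2) * d ^ 2 =
      (2 * b * c + c ^ 2 * t) * (t ^ 3 - t + m ^ 6) := by
  linear_combination E₀ + t * E₁ + t ^ 2 * E₂

lemma three_dvd_of_twentyseven_dvd (h3 : 3 ∣ m) (E₀ : a ^ 2 - 2 * b * c * m ^ 6 = d ^ 2 * c₀)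
    (E₁ : 2 * a * b + 2 * b * c - c ^ 2 * m ^ 6 = d ^ 2 * c₁)
    (E₂ : b ^ 2 + 2 * a * c + c ^ 2 = d ^ 2 * c₂) (hd : 27 ∣ d) :
    3 ∣ a ∧ 3 ∣ b ∧ 3 ∣ c ∧ 3 ∣ d := by
  have hM : (3 : ℤ) ^ 6 ∣ m ^ 6 := pow_dvd_pow_of_dvd h3 6
  have hd2 : (3 : ℤ) ^ 6 ∣ d ^ 2 := by
    obtain ⟨k, rfl⟩ := hd
    exact ⟨k ^ 2, by ring⟩
  have key : ∀ t : ℤ, t ^ 3 = t → 27 ∣ a + b * t + c * t ^ 2 := by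
    intro t ht
    have h := sq_sub_eq_mul_eval E₀ E₁ E₂ t
    rw [ht, sub_self, zero_add, sub_eq_iff_eq_add] at h
    refine (Int.pow_dvd_pow_iff two_ne_zero).1 ?_
    rw [h, show (27 : ℤ) ^ 2 = 3 ^ 6 by norm_num]
    exact dvd_add (hM.mul_left _) (hd2.mul_left _)
  have h₀ := key 0 (by norm_num)
  have h₁ := key 1 (by norm_num)
  have h₂ := key (-1) (by norm_num)
  norm_num at h₀ h₁ h₂
  omega

lemma twentyseven_dvd_of_not_isSquare_eval (h3 : 3 ∣ m)
    (E₀ : a ^ 2 - 2 * b * c * m ^ 6 = d ^ 2 * c₀)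
    (E₁ : 2 * a * b + 2 * b * c - c ^ 2 * m ^ 6 = d ^ 2 * c₁)
    (E₂ : b ^ 2 + 2 * a * c + c ^ 2 = d ^ 2 * c₂) {t : ℤ} (ht : t ^ 3 = t)
    (hv : ¬IsSquare ((c₀ + c₁ * t + c₂ * t ^ 2 : ℤ) : ZMod 3)) : 27 ∣ d := by
  refine pow_dvd_of_pow_dvd_sq_sub_mul_sq (p := 3) hv 3 (e := a + b * t + c * t ^ 2) ?_
  rw [sq_sub_eq_mul_eval E₀ E₁ E₂ t, ht, sub_self, zero_add]
  exact (pow_dvd_pow_of_dvd h3 6).mul_left _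

/-- At `θ = m⁶`, congruent modulo `m¹⁸` to a root of `f`, the element `-θ(1 + θ)(m² + θ)` takes the
value `-m⁸(1 + m⁴ + m⁶)`: `-1` times a square times a unit `≡ 1 mod 3`. -/
lemma twentyseven_dvd_of_PQR (h3 : 3 ∣ m) (hm : m ≠ 0)
    (E₀ : a ^ 2 - 2 * b * c * m ^ 6 = d ^ 2 * m ^ 6)
    (E₁ : 2 * a * b + 2 * b * c - c ^ 2 * m ^ 6 = d ^ 2 * (-1 - m ^ 2))
    (E₂ : b ^ 2 + 2 * a * c + c ^ 2 = d ^ 2 * (-1 - m ^ 2)) : 27 ∣ d := by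
  have h' : (a + b * m ^ 6 + c * (m ^ 6) ^ 2) ^ 2 =
      (m ^ 4) ^ 2 * (-(1 + m ^ 4 + m ^ 6) * d ^ 2 + m ^ 10 * (2 * b * c + c ^ 2 * m ^ 6)) := by
    linear_combination sq_sub_eq_mul_eval E₀ E₁ E₂ (m ^ 6)
  obtain ⟨e, he⟩ := (Int.pow_dvd_pow_iff two_ne_zero).1 (Dvd.intro _ h'.symm)
  rw [he, mul_pow] at h'
  have he' := mul_left_cancel₀ (pow_ne_zero 2 (pow_ne_zero 4 hm)) h'
  refine pow_dvd_of_pow_dvd_sq_sub_mul_sq (p := 3) (v := -(1 + m ^ 4 + m ^ 6)) ?_ 3 (e := e) ?_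
  · have hm0 : (m : ZMod 3) = 0 := (ZMod.intCast_zmod_eq_zero_iff_dvd m 3).2 h3
    push_cast [hm0]
    decide
  · rw [he', add_sub_cancel_left]
    exact (pow_dvd_pow_of_dvd h3 6).trans
      (Dvd.intro (m ^ 4 * (2 * b * c + c ^ 2 * m ^ 6)) (by ring))

lemma two_dvd_of_PR (hodd : Odd m) (E₀ : a ^ 2 - 2 * b * c * m ^ 6 = d ^ 2 * 0)
    (E₁ : 2 * a * b + 2 * b * c - c ^ 2 * m ^ 6 = d ^ 2 * m ^ 2)
    (E₂ : b ^ 2 + 2 * a * c + c ^ 2 = d ^ 2 * 1) :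
    2 ∣ a ∧ 2 ∣ b ∧ 2 ∣ c ∧ 2 ∣ d := by
  have hm : (m : ZMod 8) ^ 2 = 1 := by
    obtain ⟨k, rfl⟩ := hodd
    push_cast
    generalize (k : ZMod 8) = x
    revert x
    decide
  have hM : (m : ZMod 8) ^ 6 = 1 := by rw [show 6 = 2 * 3 by rfl, pow_mul, hm, one_pow]
  have key : ∀ a b c d : ZMod 8, a ^ 2 - 2 * b * c = 0 → 2 * a * b + 2 * b * c - c ^ 2 = d ^ 2 →
      b ^ 2 + 2 * a * c + c ^ 2 = d ^ 2 → 4 * a = 0 ∧ 4 * b = 0 ∧ 4 * c = 0 ∧ 4 * d = 0 := by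
    decide
  have F₀ := congrArg (Int.cast : ℤ → ZMod 8) E₀
  have F₁ := congrArg (Int.cast : ℤ → ZMod 8) E₁
  have F₂ := congrArg (Int.cast : ℤ → ZMod 8) E₂
  push_cast [hm, hM] at F₀ F₁ F₂
  obtain ⟨ha, hb, hc, hd⟩ := key a b c d (by linear_combination F₀) (by linear_combination F₁)
    (by linear_combination F₂)
  have two_dvd : ∀ x : ℤ, 4 * (x : ZMod 8) = 0 → 2 ∣ x := fun x hx ↦ by
    have := (ZMod.intCast_zmod_eq_zero_iff_dvd (4 * x) 8).1 (by push_cast; exact hx)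
    omega
  exact ⟨two_dvd a ha, two_dvd b hb, two_dvd c hc, two_dvd d hd⟩

end IntegerDescent

instance (m : ℤ) : (Em m).IsCharNeTwoNF := ⟨rfl, rfl⟩

lemma irreducible_rhsPoly {m : ℤ} (hodd : Odd m) : Irreducible (Em m).rhsPoly := by
  rw [irreducible_iff_roots_eq_zero_of_degree_le_three (by rw [natDegree_rhsPoly]; norm_num)
    (natDegree_rhsPoly _).le, Multiset.eq_zero_iff_forall_notMem]
  intro r hr
  rw [mem_roots (monic_rhsPoly _).ne_zero, IsRoot] at hr
  exact no_rat_root_of_odd (hodd.pow (n := 6)) r (by simpa [rhsPoly, Em, sub_eq_add_neg] using hr)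

variable {m : ℤ} [Fact (Irreducible (Em m).rhsPoly)]

local notation "Kₘ" => AdjoinRoot (rhsPoly (Em m))

local notation "θ" => AdjoinRoot.root (rhsPoly (Em m))

lemma root_pow_three : θ ^ 3 = θ - (m : Kₘ) ^ 6 := by
  have h : aeval θ (X ^ 3 + C (0 : ℚ) * X ^ 2 + C (-1 : ℚ) * X + C ((m : ℚ) ^ 6)) = 0 :=
    (AdjoinRoot.aeval_eq _).trans AdjoinRoot.mk_self
  simp at h
  linear_combination h

lemma coeff_eqs_of_sq_eq {a b c d c₀ c₁ c₂ : ℤ}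
    (h : ((a : Kₘ) + b * θ + c * θ ^ 2) ^ 2 = d ^ 2 * (c₀ + c₁ * θ + c₂ * θ ^ 2)) :
    a ^ 2 - 2 * b * c * m ^ 6 = d ^ 2 * c₀ ∧ 2 * a * b + 2 * b * c - c ^ 2 * m ^ 6 = d ^ 2 * c₁ ∧
      b ^ 2 + 2 * a * c + c ^ 2 = d ^ 2 * c₂ := by
  obtain ⟨h₀, h₁, h₂⟩ := eq_zero_of_add_mul_root_add_mul_root_sq_eq_zero (W := Em m)
    (u := (a ^ 2 - 2 * b * c * m ^ 6 - d ^ 2 * c₀ : ℤ))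
    (v := (2 * a * b + 2 * b * c - c ^ 2 * m ^ 6 - d ^ 2 * c₁ : ℤ))
    (w := (b ^ 2 + 2 * a * c + c ^ 2 - d ^ 2 * c₂ : ℤ)) (by
      simp only [map_intCast]
      push_cast
      linear_combination h - (2 * b * c + c ^ 2 * θ) * root_pow_three (m := m))
  exact ⟨sub_eq_zero.1 (by exact_mod_cast h₀), sub_eq_zero.1 (by exact_mod_cast h₁),
    sub_eq_zero.1 (by exact_mod_cast h₂)⟩

lemma not_isSquare_of_forall_dvd {c₀ c₁ c₂ k : ℤ} (hk : 2 ≤ k)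
    (hdvd : ∀ a b c d : ℤ, a ^ 2 - 2 * b * c * m ^ 6 = d ^ 2 * c₀ →
      2 * a * b + 2 * b * c - c ^ 2 * m ^ 6 = d ^ 2 * c₁ → b ^ 2 + 2 * a * c + c ^ 2 = d ^ 2 * c₂ →
      k ∣ a ∧ k ∣ b ∧ k ∣ c ∧ k ∣ d) :
    ¬IsSquare ((c₀ : Kₘ) + c₁ * θ + c₂ * θ ^ 2) := by
  rintro ⟨s, hs⟩
  obtain ⟨a, b, c, d, hd, hds⟩ := exists_int_mul_eq s
  refine hd (eq_zero_of_sq_eq_of_forall_dvd (x := θ) (η := c₀ + c₁ * θ + c₂ * θ ^ 2) hk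
    (fun a b c d h ↦ ?_) (a := a) (b := b) (c := c) ?_)
  · obtain ⟨E₀, E₁, E₂⟩ := coeff_eqs_of_sq_eq h
    exact hdvd a b c d E₀ E₁ E₂
  · rw [← hds, hs]
    ring

lemma not_isSquare_of_not_isSquare_eval (h3 : 3 ∣ m) {c₀ c₁ c₂ t : ℤ} (ht : t ^ 3 = t)
    (hv : ¬IsSquare ((c₀ + c₁ * t + c₂ * t ^ 2 : ℤ) : ZMod 3)) :
    ¬IsSquare ((c₀ : Kₘ) + c₁ * θ + c₂ * θ ^ 2) :=
  not_isSquare_of_forall_dvd (k := 3) (by norm_num) fun _ _ _ _ E₀ E₁ E₂ ↦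
    three_dvd_of_twentyseven_dvd h3 E₀ E₁ E₂
      (twentyseven_dvd_of_not_isSquare_eval h3 E₀ E₁ E₂ ht hv)

lemma not_isSquare_P (h3 : 3 ∣ m) : ¬IsSquare (-θ) := by
  rw [show -θ = ((0 : ℤ) : Kₘ) + (-1 : ℤ) * θ + (0 : ℤ) * θ ^ 2 by push_cast; ring]
  exact not_isSquare_of_not_isSquare_eval h3 (t := 1) (by norm_num) (by decide)

lemma not_isSquare_Q (h3 : 3 ∣ m) : ¬IsSquare (-1 - θ) := by
  rw [show -1 - θ = ((-1 : ℤ) : Kₘ) + (-1 : ℤ) * θ + (0 : ℤ) * θ ^ 2 by push_cast; ring]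
  exact not_isSquare_of_not_isSquare_eval h3 (t := 0) (by norm_num) (by decide)

lemma not_isSquare_R (h3 : 3 ∣ m) : ¬IsSquare (-(m : Kₘ) ^ 2 - θ) := by
  have hm : (m : ZMod 3) = 0 := (ZMod.intCast_zmod_eq_zero_iff_dvd m 3).2 h3
  rw [show -(m : Kₘ) ^ 2 - θ = ((-m ^ 2 : ℤ) : Kₘ) + (-1 : ℤ) * θ + (0 : ℤ) * θ ^ 2 by
    push_cast; ring]
  exact not_isSquare_of_not_isSquare_eval h3 (t := 1) (by norm_num) (by push_cast [hm]; decide)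

lemma not_isSquare_PQ (h3 : 3 ∣ m) : ¬IsSquare (-θ * (-1 - θ)) := by
  rw [show -θ * (-1 - θ) = ((0 : ℤ) : Kₘ) + (1 : ℤ) * θ + (1 : ℤ) * θ ^ 2 by push_cast; ring]
  exact not_isSquare_of_not_isSquare_eval h3 (t := 1) (by norm_num) (by decide)

lemma not_isSquare_QR (h3 : 3 ∣ m) : ¬IsSquare ((-1 - θ) * (-(m : Kₘ) ^ 2 - θ)) := by
  have hm : (m : ZMod 3) = 0 := (ZMod.intCast_zmod_eq_zero_iff_dvd m 3).2 h3
  rw [show (-1 - θ) * (-(m : Kₘ) ^ 2 - θ) =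
      ((m ^ 2 : ℤ) : Kₘ) + (1 + m ^ 2 : ℤ) * θ + (1 : ℤ) * θ ^ 2 by push_cast; ring]
  exact not_isSquare_of_not_isSquare_eval h3 (t := 1) (by norm_num) (by push_cast [hm]; decide)

lemma not_isSquare_PR (hodd : Odd m) : ¬IsSquare (-θ * (-(m : Kₘ) ^ 2 - θ)) := by
  rw [show -θ * (-(m : Kₘ) ^ 2 - θ) = ((0 : ℤ) : Kₘ) + (m ^ 2 : ℤ) * θ + (1 : ℤ) * θ ^ 2 by
    push_cast; ring]
  exact not_isSquare_of_forall_dvd le_rfl fun _ _ _ _ E₀ E₁ E₂ ↦ two_dvd_of_PR hodd E₀ E₁ E₂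

lemma not_isSquare_PQR (hodd : Odd m) (h3 : 3 ∣ m) :
    ¬IsSquare (-θ * (-1 - θ) * (-(m : Kₘ) ^ 2 - θ)) := by
  rw [show -θ * (-1 - θ) * (-(m : Kₘ) ^ 2 - θ) =
      ((m ^ 6 : ℤ) : Kₘ) + (-1 - m ^ 2 : ℤ) * θ + (-1 - m ^ 2 : ℤ) * θ ^ 2 by
    push_cast; linear_combination -root_pow_three (m := m)]
  have hm : m ≠ 0 := by rintro rfl; simp at hodd
  exact not_isSquare_of_forall_dvd (k := 3) (by norm_num) fun _ _ _ _ E₀ E₁ E₂ ↦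
    three_dvd_of_twentyseven_dvd h3 E₀ E₁ E₂ (twentyseven_dvd_of_PQR h3 hm E₀ E₁ E₂)

lemma two_dvd_of_zsmul_add_zsmul_add_zsmul_eq_zero (hodd : Odd m) (h3 : 3 ∣ m) {yP yQ yR : ℚ}
    (hP : (Em m).toAffine.Nonsingular 0 yP) (hQ : (Em m).toAffine.Nonsingular (-1) yQ)
    (hR : (Em m).toAffine.Nonsingular (-(m : ℚ) ^ 2) yR) {a b c : ℤ}
    (h : a • Affine.Point.some _ _ hP + b • Affine.Point.some _ _ hQ +
      c • Affine.Point.some _ _ hR = 0) :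
    2 ∣ a ∧ 2 ∣ b ∧ 2 ∣ c := by
  have h' := congrArg (fun P ↦ (twoDescent (Em m) P).toMul) h
  simp only [map_add, map_zsmul, toMul_add, toMul_zsmul, map_zero, toMul_zero,
    toMul_twoDescent_some] at h'
  rw [zpow_eq_zpow_emod' a (ModSquares.sq_eq_one _), zpow_eq_zpow_emod' b (ModSquares.sq_eq_one _),
    zpow_eq_zpow_emod' c (ModSquares.sq_eq_one _)] at h'
  rcases Int.emod_two_eq_zero_or_one a with ha | ha <;>
  rcases Int.emod_two_eq_zero_or_one b with hb | hb <;>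
  rcases Int.emod_two_eq_zero_or_one c with hc | hc <;>
  simp only [Nat.cast_ofNat, ha, hb, hc, zpow_zero, zpow_one, one_mul, mul_one,
    ← QuotientGroup.mk_mul, ModSquares.mk_eq_one_iff, Units.val_mul, xSubRoot, Units.val_mk0,
    map_zero, map_neg, map_one, map_pow, map_intCast, zero_sub] at h'
  · exact ⟨Int.dvd_of_emod_eq_zero ha, Int.dvd_of_emod_eq_zero hb, Int.dvd_of_emod_eq_zero hc⟩
  · exact absurd h' (not_isSquare_R h3)
  · exact absurd h' (not_isSquare_Q h3)
  · exact absurd h' (not_isSquare_QR h3)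
  · exact absurd h' (not_isSquare_P h3)
  · exact absurd h' (not_isSquare_PR hodd)
  · exact absurd h' (not_isSquare_PQ h3)
  · exact absurd h' (not_isSquare_PQR hodd h3)

end Em

theorem Em_points_linearIndependent_rank_ge_three_general
    (m : ℤ) (hodd : Odd m) (h3 : (3 : ℤ) ∣ m)
    (hP : (Em m).toAffine.Nonsingular 0 ((m : ℚ) ^ 3))
    (hQ : (Em m).toAffine.Nonsingular (-1) ((m : ℚ) ^ 3))
    (hR : (Em m).toAffine.Nonsingular (-(m : ℚ) ^ 2) (m : ℚ)) :
    LinearIndependent ℤ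
      ![WeierstrassCurve.Affine.Point.some _ _ hP,
        WeierstrassCurve.Affine.Point.some _ _ hQ,
        WeierstrassCurve.Affine.Point.some _ _ hR] ∧
      3 ≤ Module.rank ℤ (Em m).toAffine.Point := by
  have : Fact (Irreducible (Em m).rhsPoly) := ⟨Em.irreducible_rhsPoly hodd⟩
  have hind : LinearIndependent ℤ ![Affine.Point.some _ _ hP, Affine.Point.some _ _ hQ,
      Affine.Point.some _ _ hR] := by
    refine linearIndependent_int_of_forall_two_dvd (fun _ ↦ eq_zero_of_two_nsmul_eq_zero)
      fun g hg ↦ ?_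
    rw [Fin.sum_univ_three] at hg
    obtain ⟨h₀, h₁, h₂⟩ := Em.two_dvd_of_zsmul_add_zsmul_add_zsmul_eq_zero hodd h3 hP hQ hR hg
    exact Fin.forall_fin_succ.2 ⟨h₀, Fin.forall_fin_succ.2 ⟨h₁, Fin.forall_fin_one.2 h₂⟩⟩
  exact ⟨hind, by simpa using hind.cardinal_le_rank⟩

/-- For `m > 1` an odd integer divisible by `3`, the points `P = (0, m³)`, `Q = (-1, m³)` and
`R = (-m², m)` on `E_m : y² = x³ - x + m⁶` are linearly independent over `ℤ` in `E_m(ℚ)`;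
in particular the rank of `E_m(ℚ)` is at least `3`. -/
theorem Em_points_linearIndependent_rank_ge_three
    (m : ℤ) (hm : 1 < m) (hodd : Odd m) (h3 : (3 : ℤ) ∣ m)
    (hP : (Em m).toAffine.Nonsingular 0 ((m : ℚ) ^ 3))
    (hQ : (Em m).toAffine.Nonsingular (-1) ((m : ℚ) ^ 3))
    (hR : (Em m).toAffine.Nonsingular (-(m : ℚ) ^ 2) (m : ℚ)) :
    LinearIndependent ℤ
      ![WeierstrassCurve.Affine.Point.some _ _ hP,
        WeierstrassCurve.Affine.Point.some _ _ hQ,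
        WeierstrassCurve.Affine.Point.some _ _ hR] ∧
      3 ≤ Module.rank ℤ (Em m).toAffine.Point :=
  Em_points_linearIndependent_rank_ge_three_general m hodd h3 hP hQ hR
end

section
/- Let m > 1 be an odd integer divisible by 3, let E_m be the elliptic curve over ℚ defined by y² = x³ - x + m⁶, and let P = (0, m³) and Q = (-1, m³) be rational points on E_m. Then the images of P and Q generate a subgroup of order 4 in E_m(ℚ)/2E_m(ℚ); equivalently, none of the points P, Q, and P + Q lies in 2E_m(ℚ). -/
/-- The doubling map `P ↦ 2 • P` as an additive group homomorphism; its range is the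
subgroup `2A` of `A`. -/
def doublingHom (A : Type*) [AddCommGroup A] : A →+ A :=
  AddMonoidHom.mk' (fun a => 2 • a) (fun a b => smul_add 2 a b)

open WeierstrassCurve.Affine

theorem zsmul_eq_zero_or_eq_self {G : Type*} [AddGroup G] {p : G} (hp : p + p = 0) (k : ℤ) :
    k • p = 0 ∨ k • p = p := by
  obtain ⟨j, rfl | rfl⟩ := Int.even_or_odd' k
  · left
    rw [mul_comm, mul_zsmul, two_zsmul, hp, zsmul_zero]
  · right
    rw [add_zsmul, mul_comm, mul_zsmul, two_zsmul, hp, zsmul_zero, zero_add, one_zsmul]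

theorem AddSubgroup.card_closure_pair_eq_four {G : Type*} [AddCommGroup G] {p q : G}
    (hp2 : p + p = 0) (hq2 : q + q = 0) (hp : p ≠ 0) (hq : q ≠ 0) (hpq : p + q ≠ 0) :
    Nat.card (closure {p, q}) = 4 := by
  have hcoe : (closure {p, q} : Set G) = {0, p, q, p + q} := by
    ext z
    simp only [SetLike.mem_coe, mem_closure_pair, Set.mem_insert_iff, Set.mem_singleton_iff]
    constructor
    · rintro ⟨k, l, rfl⟩
      rcases zsmul_eq_zero_or_eq_self hp2 k with hk | hk <;>
        rcases zsmul_eq_zero_or_eq_self hq2 l with hl | hl <;> simp [hk, hl]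
    · rintro (rfl | rfl | rfl | rfl)
      exacts [⟨0, 0, by simp⟩, ⟨1, 0, by simp⟩, ⟨0, 1, by simp⟩, ⟨1, 1, by simp⟩]
  have hpq' : p ≠ q := fun h => hpq (h ▸ hq2)
  rw [← SetLike.coe_sort_coe, hcoe, Nat.card_coe_set_eq, Set.ncard_insert_of_notMem,
    Set.ncard_insert_of_notMem, Set.ncard_pair]
  all_goals simp [hp, hq, hpq', hp.symm, hq.symm, hpq.symm]

theorem mk'_doublingHom_range_add_self {A : Type*} [AddCommGroup A] (a : A) :
    QuotientAddGroup.mk' (doublingHom A).range a + QuotientAddGroup.mk' (doublingHom A).range a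
      = 0 := by
  rw [← map_add, QuotientAddGroup.mk'_apply, QuotientAddGroup.eq_zero_iff]
  exact ⟨a, two_nsmul a⟩

open Polynomial in
theorem Rat.exists_intCast_eq_of_quartic_eq_zero (a b c d : ℤ) {x : ℚ}
    (hx : x ^ 4 + a * x ^ 3 + b * x ^ 2 + c * x + d = 0) : ∃ n : ℤ, (n : ℚ) = x :=
  IsIntegrallyClosed.isIntegral_iff.mp
    ⟨X ^ 4 + C a * X ^ 3 + C b * X ^ 2 + C c * X + C d, by monicity!, by
      simp only [eval₂_add, eval₂_mul, eval₂_pow, eval₂_C, eval₂_X]; exact hx⟩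

theorem three_mul_sq_sub_one_sq_ne {n c m : ℤ} (h3 : 3 ∣ m) :
    (3 * n ^ 2 - 1) ^ 2 ≠ 4 * (c + 2 * n) * (n ^ 3 - n + m ^ 6) := by
  intro h
  have hm : (m : ZMod 3) = 0 := (ZMod.intCast_zmod_eq_zero_iff_dvd m 3).mpr h3
  have h30 : (3 : ZMod 3) = 0 := rfl
  have h' := congrArg (Int.cast : ℤ → ZMod 3) h
  push_cast at h'
  rw [ZMod.pow_card, hm, h30] at h'
  simp at h'

theorem Em_three_mul_sq_sub_one_sq_of_add_self_eq_some {m : ℤ} {x y x₀ y₀ : ℚ}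
    {h : (Em m).toAffine.Nonsingular x y} {h₀ : (Em m).toAffine.Nonsingular x₀ y₀}
    (hS : Point.some (h := h) + Point.some (h := h) = Point.some (h := h₀)) :
    (3 * x ^ 2 - 1) ^ 2 = 4 * (x₀ + 2 * x) * (x ^ 3 - x + (m : ℚ) ^ 6) := by
  by_cases hy : y = (Em m).toAffine.negY x y
  · rw [Point.add_self_of_Y_eq hy] at hS
    exact absurd hS (Point.some_ne_zero h₀).symm
  rw [Point.add_self_of_Y_ne hy] at hS
  injection hS with hx
  have hy0 : y ≠ 0 := by
    contrapose! hy
    simp [hy, negY, Em]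
  have hcurve : y ^ 2 = x ^ 3 - x + (m : ℚ) ^ 6 := by
    have := (equation_iff x y).mp h.1
    simp only [Em] at this
    linear_combination this
  have hslope : (Em m).toAffine.slope x x y y = (3 * x ^ 2 - 1) / (2 * y) := by
    rw [slope_of_Y_ne rfl hy]
    simp only [negY, Em]
    ring
  rw [addX, hslope] at hx
  simp only [Em] at hx
  rw [← hcurve, ← hx]
  field_simp
  ring

theorem Em_some_notMem_doublingHom_range_of_X_eq_intCast {m : ℤ} (h3 : 3 ∣ m) {x₀ y₀ : ℚ}
    (h₀ : (Em m).toAffine.Nonsingular x₀ y₀) {c : ℤ} (hc : x₀ = c) :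
    Point.some (h := h₀) ∉ (doublingHom (Em m).toAffine.Point).range := by
  rintro ⟨_ | ⟨x, y, h⟩, hS⟩
  · exact Point.some_ne_zero h₀ (hS.symm.trans (map_zero _))
  have hrel := Em_three_mul_sq_sub_one_sq_of_add_self_eq_some ((two_nsmul _).symm.trans hS)
  subst hc
  obtain ⟨n, rfl⟩ := Rat.exists_intCast_eq_of_quartic_eq_zero (x := x)
    (-4 * c) 2 (4 * c - 8 * m ^ 6) (1 - 4 * c * m ^ 6) (by push_cast; linear_combination hrel)
  exact three_mul_sq_sub_one_sq_ne h3 (by exact_mod_cast hrel)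

theorem Em_P_Q_generate_order_four_general
    (m : ℤ) (h3 : (3 : ℤ) ∣ m)
    (hP : (Em m).toAffine.Nonsingular 0 ((m : ℚ) ^ 3))
    (hQ : (Em m).toAffine.Nonsingular (-1) ((m : ℚ) ^ 3)) :
    Nat.card ↥(AddSubgroup.closure
        {QuotientAddGroup.mk' (doublingHom (Em m).toAffine.Point).range
          (WeierstrassCurve.Affine.Point.some (h := hP)),
         QuotientAddGroup.mk' (doublingHom (Em m).toAffine.Point).range
          (WeierstrassCurve.Affine.Point.some (h := hQ))}) = 4 ∧
      WeierstrassCurve.Affine.Point.some (h := hP) ∉ (doublingHom (Em m).toAffine.Point).range ∧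
      WeierstrassCurve.Affine.Point.some (h := hQ) ∉ (doublingHom (Em m).toAffine.Point).range ∧
      WeierstrassCurve.Affine.Point.some (h := hP) + WeierstrassCurve.Affine.Point.some (h := hQ) ∉
        (doublingHom (Em m).toAffine.Point).range := by
  have hx : (0 : ℚ) ≠ -1 := by norm_num
  have hNP := Em_some_notMem_doublingHom_range_of_X_eq_intCast h3 hP (c := 0) (by simp)
  have hNQ := Em_some_notMem_doublingHom_range_of_X_eq_intCast h3 hQ (c := -1) (by simp)
  have hNPQ : Point.some (h := hP) + Point.some (h := hQ) ∉ (doublingHom _).range := by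
    rw [Point.add_of_X_ne hx]
    refine Em_some_notMem_doublingHom_range_of_X_eq_intCast h3 _ (c := 1) ?_
    rw [slope_of_X_ne hx, addX]
    simp [Em]
  refine ⟨?_, hNP, hNQ, hNPQ⟩
  rw [← QuotientAddGroup.eq_zero_iff] at hNP hNQ
  rw [← QuotientAddGroup.eq_zero_iff, QuotientAddGroup.mk_add] at hNPQ
  exact AddSubgroup.card_closure_pair_eq_four (mk'_doublingHom_range_add_self _)
    (mk'_doublingHom_range_add_self _) hNP hNQ hNPQ

/-- For `m > 1` odd and divisible by `3`, the images of `P = (0, m³)` and `Q = (-1, m³)`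
generate a subgroup of order `4` in `E_m(ℚ)/2E_m(ℚ)`; equivalently, none of `P`, `Q` and
`P + Q` lies in `2E_m(ℚ)`. -/
theorem Em_P_Q_generate_order_four
    (m : ℤ) (hm : 1 < m) (hodd : Odd m) (h3 : (3 : ℤ) ∣ m)
    (hP : (Em m).toAffine.Nonsingular 0 ((m : ℚ) ^ 3))
    (hQ : (Em m).toAffine.Nonsingular (-1) ((m : ℚ) ^ 3)) :
    Nat.card ↥(AddSubgroup.closure
        {QuotientAddGroup.mk' (doublingHom (Em m).toAffine.Point).range
          (WeierstrassCurve.Affine.Point.some (h := hP)),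
         QuotientAddGroup.mk' (doublingHom (Em m).toAffine.Point).range
          (WeierstrassCurve.Affine.Point.some (h := hQ))}) = 4 ∧
      WeierstrassCurve.Affine.Point.some (h := hP) ∉ (doublingHom (Em m).toAffine.Point).range ∧
      WeierstrassCurve.Affine.Point.some (h := hQ) ∉ (doublingHom (Em m).toAffine.Point).range ∧
      WeierstrassCurve.Affine.Point.some (h := hP) + WeierstrassCurve.Affine.Point.some (h := hQ) ∉
        (doublingHom (Em m).toAffine.Point).range :=
  Em_P_Q_generate_order_four_general m h3 hP hQ
end

section
/- Let m > 1 be an odd integer divisible by 3, and let E_m be the elliptic curve over ℚ defined by y² = x³ - x + m⁶. Let A = (k, l) and B = (x₀, y₀) be rational points on E_m. If k is an odd integer, then A ≠ 2B. -/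
open WeierstrassCurve.Affine

theorem WeierstrassCurve.Affine.addX_slope_self_mul_sq_of_isShortNF {F : Type*} [Field F]
    [DecidableEq F] {W : WeierstrassCurve F} [W.IsShortNF] {x y : F}
    (h : W.toAffine.Equation x y) (hy : y ≠ W.toAffine.negY x y) :
    W.toAffine.addX x x (W.toAffine.slope x x y y) * (2 * y) ^ 2 =
      x ^ 4 - 2 * W.a₄ * x ^ 2 - 8 * W.a₆ * x + W.a₄ ^ 2 := by
  have ha₁ := W.a₁_of_isShortNF
  have ha₂ := W.a₂_of_isShortNF
  have ha₃ := W.a₃_of_isShortNF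
  rw [equation_iff, ha₁, ha₂, ha₃] at h
  have h2y : y - W.toAffine.negY x y = 2 * y := by rw [negY, ha₁, ha₃]; ring
  rw [slope_of_Y_ne rfl hy, h2y, addX]
  simp only [ha₁, ha₂]
  obtain ⟨h2, hy0⟩ := mul_ne_zero_iff.mp (h2y ▸ sub_ne_zero.mpr hy)
  field_simp
  linear_combination (-8 * x) * h

instance (m : ℤ) : (Em m).IsShortNF := ⟨rfl, rfl, rfl⟩

theorem ZMod.eq_zero_of_doubling_relation_mod_three (k c p q : ZMod 3) (hc : c = 0)
    (h : k * (4 * (p ^ 3 * q - p * q ^ 3 + c * q ^ 4)) = (p ^ 2 + q ^ 2) ^ 2 - 8 * c * p * q ^ 3) :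
    p = 0 ∧ q = 0 := by
  subst hc
  revert k p q
  decide

theorem Rat.intCast_mul_four_mul_ne_of_three_dvd (k c : ℤ) (hc : 3 ∣ c) (x : ℚ) :
    k * (4 * (x ^ 3 - x + c)) ≠ (x ^ 2 + 1) ^ 2 - 8 * c * x := by
  intro h
  have hx : x = x.num / x.den := (Rat.num_div_den x).symm
  have hq : (x.den : ℚ) ≠ 0 := by positivity
  set p := x.num
  set q : ℤ := (x.den : ℤ) with hq_def
  have hZ : k * (4 * (p ^ 3 * q - p * q ^ 3 + c * q ^ 4)) =
      (p ^ 2 + q ^ 2) ^ 2 - 8 * c * p * q ^ 3 := by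
    have : ((k * (4 * (p ^ 3 * q - p * q ^ 3 + c * q ^ 4)) : ℤ) : ℚ) =
        (((p ^ 2 + q ^ 2) ^ 2 - 8 * c * p * q ^ 3 : ℤ) : ℚ) := by
      rw [hx] at h
      field_simp at h
      push_cast [hq_def]
      linear_combination h
    exact_mod_cast this
  have hmod := congrArg (Int.cast : ℤ → ZMod 3) hZ
  push_cast at hmod
  obtain ⟨hp3, hq3⟩ := ZMod.eq_zero_of_doubling_relation_mod_three _ _ _ _
    ((ZMod.intCast_zmod_eq_zero_iff_dvd c 3).mpr hc) hmod
  have hp3' : 3 ∣ p.natAbs := Int.natCast_dvd.mp ((ZMod.intCast_zmod_eq_zero_iff_dvd p 3).mp hp3)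
  have hq3' : 3 ∣ x.den :=
    Int.natCast_dvd_natCast.mp ((ZMod.intCast_zmod_eq_zero_iff_dvd q 3).mp hq3)
  exact absurd (Nat.eq_one_of_dvd_coprimes x.reduced hp3' hq3') (by norm_num)

theorem Em_odd_x_not_double_general
    (m : ℤ) (h3 : (3 : ℤ) ∣ m)
    (k : ℤ) (l x₀ y₀ : ℚ)
    (hA : (Em m).toAffine.Nonsingular (k : ℚ) l)
    (hB : (Em m).toAffine.Nonsingular x₀ y₀) :
    WeierstrassCurve.Affine.Point.some _ _ hA ≠ 2 • WeierstrassCurve.Affine.Point.some _ _ hB := by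
  rw [two_smul]
  by_cases hy : y₀ = (Em m).toAffine.negY x₀ y₀
  · rw [Point.add_of_Y_eq rfl hy]
    exact Point.some_ne_zero hA
  rw [Point.add_of_Y_ne hy]
  intro h
  have hdouble := addX_slope_self_mul_sq_of_isShortNF hB.left hy
  rw [← (Point.some.inj h).left] at hdouble
  have hcurve := hB.left
  rw [equation_iff] at hcurve
  apply Rat.intCast_mul_four_mul_ne_of_three_dvd k (m ^ 6) (dvd_pow h3 (by norm_num)) x₀
  simp only [Em] at hdouble hcurve
  push_cast
  linear_combination hdouble - 4 * k * hcurve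

/-- Let `m > 1` be an odd integer divisible by `3` and let `A = (k, l)` and `B = (x₀, y₀)` be
rational points on `E_m : y² = x³ - x + m⁶`. If `k` is an odd integer, then `A ≠ 2B`. -/
theorem Em_odd_x_not_double
    (m : ℤ) (hm : 1 < m) (hodd : Odd m) (h3 : (3 : ℤ) ∣ m)
    (k : ℤ) (hk : Odd k) (l x₀ y₀ : ℚ)
    (hA : (Em m).toAffine.Nonsingular (k : ℚ) l)
    (hB : (Em m).toAffine.Nonsingular x₀ y₀) :
    WeierstrassCurve.Affine.Point.some _ _ hA ≠ 2 • WeierstrassCurve.Affine.Point.some _ _ hB :=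
  Em_odd_x_not_double_general m h3 k l x₀ y₀ hA hB
end

section
/- Let m > 1 be an odd integer divisible by 3, let E_m be the elliptic curve over ℚ defined by y² = x³ - x + m⁶, and let P = (0, m³), Q = (-1, m³), and R = (-m², m) be rational points on E_m. Then none of the points R, Q + R, and P + Q + R lies in 2E_m(ℚ); i.e., each is nontrivial in E_m(ℚ)/2E_m(ℚ). -/
/-
If `S = 2T` with `T = (x, y)` on `y² = x³ - x + m⁶`, the duplication formula gives
`(x² + 1)² - 8m⁶x = 4 x(S) (x³ - x + m⁶)`. When `x(S)` is an integer this makes `x` a root of a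
monic integer quartic, so `x` is an integer too; but for `3 ∣ m` the quartic is `≡ (x² + 1)²`
modulo 3 (as `x³ ≡ x`), and `-1` is not a square mod 3. The three points
`R = (-m², m)`, `Q + R = (2m² + 1, -3m³ - 2m)` and `P + Q + R = (2m² - 1, 3m³ - 2m)` all have
integral `x`-coordinates.
-/

open WeierstrassCurve WeierstrassCurve.Affine WeierstrassCurve.Affine.Point Polynomial

namespace WeierstrassCurve.Affine.Point

variable {F : Type*} [Field F] [DecidableEq F] {W : WeierstrassCurve F} [W.IsShortNF]

theorem exists_some_add_some_eq {x₁ y₁ x₂ y₂ ℓ x₃ y₃ : F} (h₁ : W.toAffine.Nonsingular x₁ y₁)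
    (h₂ : W.toAffine.Nonsingular x₂ y₂) (hx : x₁ ≠ x₂) (hℓ : y₁ - y₂ = ℓ * (x₁ - x₂))
    (hx₃ : ℓ ^ 2 - x₁ - x₂ = x₃) (hy₃ : ℓ * (x₁ - x₃) - y₁ = y₃) :
    ∃ h₃ : W.toAffine.Nonsingular x₃ y₃, some _ _ h₁ + some _ _ h₂ = some _ _ h₃ := by
  have hslope : W.toAffine.slope x₁ x₂ y₁ y₂ = ℓ := by
    rw [slope_of_X_ne hx, div_eq_iff (sub_ne_zero.mpr hx), hℓ]
  have hX : W.toAffine.addX x₁ x₂ ℓ = x₃ := by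
    simp only [addX, a₁_of_isShortNF, a₂_of_isShortNF]
    linear_combination hx₃
  have hY : W.toAffine.addY x₁ x₂ y₁ ℓ = y₃ := by
    simp only [addY, negAddY, negY, hX, a₁_of_isShortNF, a₃_of_isShortNF]
    linear_combination hy₃
  rw [← hY, ← hX, ← hslope]
  exact ⟨_, add_of_X_ne hx⟩

-- The root is `x(T)`: this is the duplication formula `x(2T) = ((x² - a₄)² - 8a₆x) / (4y²)`.
theorem exists_doubling_quartic_eq_of_two_smul_eq_some {T : W.toAffine.Point} {x' y' : F}
    {h' : W.toAffine.Nonsingular x' y'} (hT : 2 • T = some _ _ h') :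
    ∃ x : F, (x ^ 2 - W.a₄) ^ 2 - 8 * W.a₆ * x = 4 * x' * (x ^ 3 + W.a₄ * x + W.a₆) := by
  rw [two_smul] at hT
  rcases T with _ | @⟨x, y, h⟩
  · exact absurd hT.symm (some_ne_zero h')
  by_cases hy : y = W.toAffine.negY x y
  · rw [add_self_of_Y_eq hy] at hT
    exact absurd hT.symm (some_ne_zero h')
  rw [add_self_of_Y_ne hy, some.injEq] at hT
  have hneg : W.toAffine.negY x y = -y := by
    simp [negY]
  have h2y : 2 * y ≠ 0 := by
    rw [hneg] at hy; contrapose! hy; linear_combination hy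
  have heq : y ^ 2 = x ^ 3 + W.a₄ * x + W.a₆ := by
    simpa [equation_iff, a₁_of_isShortNF, a₃_of_isShortNF] using h.1
  have hℓ : W.toAffine.slope x x y y * (2 * y) = 3 * x ^ 2 + W.a₄ := by
    rw [slope_of_Y_ne rfl hy, hneg, sub_neg_eq_add, ← two_mul, div_mul_cancel₀ _ h2y]
    simp only [a₁_of_isShortNF, a₂_of_isShortNF]
    ring
  refine ⟨x, ?_⟩
  rw [← hT.1, ← heq]
  simp only [addX, a₁_of_isShortNF, a₂_of_isShortNF]
  linear_combination (-(W.toAffine.slope x x y y * (2 * y) + 3 * x ^ 2 + W.a₄)) * hℓ + 8 * x * heq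

end WeierstrassCurve.Affine.Point

instance inst_s10 (m : ℤ) : (Em m).IsShortNF := ⟨rfl, rfl, rfl⟩

theorem doubling_quartic_ne_of_three_dvd {a b : ℤ} (ha : 3 ∣ a + 1) (hb : 3 ∣ b) (t c : ℤ) :
    (t ^ 2 - a) ^ 2 - 8 * b * t ≠ 4 * c * (t ^ 3 + a * t + b) := by
  intro h
  have h' := congrArg (Int.cast : ℤ → ZMod 3) h
  have ha' : (a : ZMod 3) = -1 :=
    eq_neg_of_add_eq_zero_left (by exact_mod_cast (ZMod.intCast_zmod_eq_zero_iff_dvd _ 3).mpr ha)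
  push_cast [ha', (ZMod.intCast_zmod_eq_zero_iff_dvd b 3).mpr hb] at h'
  revert h'
  generalize (t : ZMod 3) = t
  generalize (c : ZMod 3) = c
  revert t c
  decide

theorem exists_intCast_eq_of_doubling_quartic {a b c : ℤ} {x : ℚ}
    (hx : (x ^ 2 - a) ^ 2 - 8 * b * x = 4 * c * (x ^ 3 + a * x + b)) : ∃ t : ℤ, (t : ℚ) = x := by
  have hmonic : ((X ^ 2 - C a) ^ 2 - C (8 * b) * X - C (4 * c) * (X ^ 3 + C a * X + C b) :
      ℤ[X]).Monic := by
    monicity!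
  refine isInteger_of_is_root_of_monic hmonic ?_
  simp only [eq_intCast, aeval_sub, aeval_add, map_pow, map_mul, aeval_X, map_intCast,
    map_ofNat]
  linear_combination hx

theorem Em.some_notMem_range_doublingHom {m : ℤ} (h3 : 3 ∣ m) (c : ℤ) {x y : ℚ}
    (hx : (c : ℚ) = x) (h : (Em m).toAffine.Nonsingular x y) :
    some _ _ h ∉ (doublingHom (Em m).toAffine.Point).range := by
  rintro ⟨T, hT⟩
  obtain ⟨u, hu⟩ := exists_doubling_quartic_eq_of_two_smul_eq_some (W := Em m) hT
  have hu' : (u ^ 2 - ((-1 : ℤ) : ℚ)) ^ 2 - 8 * ((m ^ 6 : ℤ) : ℚ) * u =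
      4 * c * (u ^ 3 + ((-1 : ℤ) : ℚ) * u + ((m ^ 6 : ℤ) : ℚ)) := by
    simpa [Em, ← hx] using hu
  obtain ⟨t, rfl⟩ := exists_intCast_eq_of_doubling_quartic hu'
  exact doubling_quartic_ne_of_three_dvd (a := -1) (by norm_num)
    (dvd_pow h3 (by norm_num : 6 ≠ 0)) t c (by exact_mod_cast hu')

theorem Em_R_QR_PQR_nontrivial_mod_two_general
    (m : ℤ) (hm : 1 < m) (h3 : (3 : ℤ) ∣ m)
    (hP : (Em m).toAffine.Nonsingular 0 ((m : ℚ) ^ 3))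
    (hQ : (Em m).toAffine.Nonsingular (-1) ((m : ℚ) ^ 3))
    (hR : (Em m).toAffine.Nonsingular (-(m : ℚ) ^ 2) (m : ℚ)) :
    WeierstrassCurve.Affine.Point.some _ _ hR ∉ (doublingHom (Em m).toAffine.Point).range ∧
      WeierstrassCurve.Affine.Point.some _ _ hQ + WeierstrassCurve.Affine.Point.some _ _ hR ∉
        (doublingHom (Em m).toAffine.Point).range ∧
      WeierstrassCurve.Affine.Point.some _ _ hP + WeierstrassCurve.Affine.Point.some _ _ hQ +
        WeierstrassCurve.Affine.Point.some _ _ hR ∉ (doublingHom (Em m).toAffine.Point).range := by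
  have hm2 : (1 : ℚ) < (m : ℚ) ^ 2 := by
    have : (1 : ℚ) < m := by exact_mod_cast hm
    nlinarith
  obtain ⟨hQR, eQR⟩ := exists_some_add_some_eq hQ hR (ℓ := (m : ℚ)) (x₃ := 2 * m ^ 2 + 1)
    (y₃ := -(3 * m ^ 3 + 2 * m)) (by linarith) (by ring) (by ring) (by ring)
  obtain ⟨hPQ, ePQ⟩ := exists_some_add_some_eq hP hQ (ℓ := (0 : ℚ)) (x₃ := 1) (y₃ := -(m : ℚ) ^ 3)
    (by norm_num) (by ring) (by ring) (by ring)
  obtain ⟨hPQR, ePQR⟩ := exists_some_add_some_eq hPQ hR (ℓ := -(m : ℚ)) (x₃ := 2 * m ^ 2 - 1)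
    (y₃ := 3 * m ^ 3 - 2 * m) (by linarith) (by ring) (by ring) (by ring)
  refine ⟨Em.some_notMem_range_doublingHom h3 (-m ^ 2) (by push_cast; ring) hR, ?_, ?_⟩
  · rw [eQR]
    exact Em.some_notMem_range_doublingHom h3 (2 * m ^ 2 + 1) (by push_cast; ring) hQR
  · rw [ePQ, ePQR]
    exact Em.some_notMem_range_doublingHom h3 (2 * m ^ 2 - 1) (by push_cast; ring) hPQR

/-- For `m > 1` odd and divisible by `3`, with `P = (0, m³)`, `Q = (-1, m³)` and
`R = (-m², m)` on `E_m : y² = x³ - x + m⁶`, none of `R`, `Q + R` and `P + Q + R` lies in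
`2E_m(ℚ)`, i.e. each is nontrivial in `E_m(ℚ)/2E_m(ℚ)`. -/
theorem Em_R_QR_PQR_nontrivial_mod_two
    (m : ℤ) (hm : 1 < m) (hodd : Odd m) (h3 : (3 : ℤ) ∣ m)
    (hP : (Em m).toAffine.Nonsingular 0 ((m : ℚ) ^ 3))
    (hQ : (Em m).toAffine.Nonsingular (-1) ((m : ℚ) ^ 3))
    (hR : (Em m).toAffine.Nonsingular (-(m : ℚ) ^ 2) (m : ℚ)) :
    WeierstrassCurve.Affine.Point.some _ _ hR ∉ (doublingHom (Em m).toAffine.Point).range ∧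
      WeierstrassCurve.Affine.Point.some _ _ hQ + WeierstrassCurve.Affine.Point.some _ _ hR ∉
        (doublingHom (Em m).toAffine.Point).range ∧
      WeierstrassCurve.Affine.Point.some _ _ hP + WeierstrassCurve.Affine.Point.some _ _ hQ +
        WeierstrassCurve.Affine.Point.some _ _ hR ∉ (doublingHom (Em m).toAffine.Point).range :=
  Em_R_QR_PQR_nontrivial_mod_two_general m hm h3 hP hQ hR
end

section
/- Let m > 1 be an odd integer divisible by 3, let E_m be the elliptic curve over ℚ defined by y² = x³ - x + m⁶, and let P = (0, m³) and R = (-m², m) be rational points on E_m. Then the point P + R does not lie in 2E_m(ℚ); i.e., P + R is nontrivial in E_m(ℚ)/2E_m(ℚ). -/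
open WeierstrassCurve.Affine WeierstrassCurve.Affine.Point

section Doubling

variable {F : Type*} [Field F] [DecidableEq F] {W : WeierstrassCurve F} [W.IsShortNF]

lemma exists_doubling_quartic_root {x' y' : F} {h' : W.toAffine.Nonsingular x' y'}
    {Q : W.toAffine.Point} (hQ : 2 • Q = some x' y' h') :
    ∃ x : F, 4 * x' * (x ^ 3 + W.a₄ * x + W.a₆) =
      x ^ 4 - 2 * W.a₄ * x ^ 2 - 8 * W.a₆ * x + W.a₄ ^ 2 := by
  rw [two_smul] at hQ
  rcases Q with _ | ⟨x, y, h⟩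
  · exact absurd hQ.symm (some_ne_zero h')
  by_cases hy : y = W.toAffine.negY x y
  · rw [add_self_of_Y_eq hy] at hQ
    exact absurd hQ.symm (some_ne_zero h')
  rw [add_self_of_Y_ne hy, some.injEq, slope_of_Y_ne rfl hy] at hQ
  have hcurve := (equation_iff x y).mp h.left
  simp only [addX, negY, WeierstrassCurve.IsShortNF.a₁, WeierstrassCurve.IsShortNF.a₂,
    WeierstrassCurve.IsShortNF.a₃, zero_mul, mul_zero, add_zero, sub_zero] at hQ hcurve hy
  have h2y : 2 * y ≠ 0 := fun h0 => hy (by linear_combination h0)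
  have h2 := left_ne_zero_of_mul h2y
  have hy0 := right_ne_zero_of_mul h2y
  refine ⟨x, ?_⟩
  rw [← hQ.left, ← hcurve, sub_neg_eq_add, ← two_mul]
  field_simp
  linear_combination (-32 * x) * hcurve

end Doubling

/-- `m²` times the doubling relation of `exists_doubling_quartic_root` on `E_m` at the abscissa
`x' = (2m⁴ - 2m² + 1) / m²` of `P + R`, homogenised in `x = a / b`. -/
def halvingForm {R : Type*} [CommRing R] (m a b : R) : R :=
  m ^ 2 * (a ^ 4 + 2 * a ^ 2 * b ^ 2 - 8 * m ^ 6 * a * b ^ 3 + b ^ 4) -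
    4 * (2 * m ^ 4 - 2 * m ^ 2 + 1) * (a ^ 3 * b - a * b ^ 3 + m ^ 6 * b ^ 4)

@[simp, norm_cast]
lemma Int.cast_halvingForm {R : Type*} [CommRing R] (m a b : ℤ) :
    ((halvingForm m a b : ℤ) : R) = halvingForm (m : R) a b := by
  simp [halvingForm]

lemma halvingForm_smul {R : Type*} [CommRing R] (m t a b : R) :
    halvingForm m (t * a) (t * b) = t ^ 4 * halvingForm m a b := by
  unfold halvingForm
  ring

lemma halvingForm_odd_zmod_sixteen (k u v : ZMod 16) :
    halvingForm (2 * k + 1) (2 * u + 1) (2 * v + 1) = 8 := by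
  revert k u v
  unfold halvingForm
  decide +kernel

lemma Int.odd_or_odd_of_isCoprime {a b : ℤ} (h : IsCoprime a b) : Odd a ∨ Odd b := by
  rcases Int.even_or_odd a with ha | ha
  · obtain ⟨k, rfl⟩ := ha.two_dvd
    exact Or.inr (Int.isCoprime_two_left.mp h.of_mul_left_left)
  · exact Or.inl ha

lemma halvingForm_one_zmod_two (a b : ZMod 2) : halvingForm 1 a b = a + b := by
  revert a b
  decide

lemma halvingForm_ne_zero {m a b : ℤ} (hm : Odd m) (hab : Odd a ∨ Odd b) :
    halvingForm m a b ≠ 0 := by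
  intro h
  have hsum : Even (a + b) := by
    have h2 := congrArg (Int.cast : ℤ → ZMod 2) h
    rwa [Int.cast_halvingForm, hm.intCast_zmod_two, halvingForm_one_zmod_two, ← Int.cast_add,
      Int.cast_zero, ZMod.intCast_eq_zero_iff_even] at h2
  obtain ⟨⟨u, rfl⟩, ⟨v, rfl⟩⟩ : Odd a ∧ Odd b := by
    rw [Int.even_add, ← Int.not_odd_iff_even, ← Int.not_odd_iff_even] at hsum
    tauto
  obtain ⟨k, rfl⟩ := hm
  have h16 := congrArg (Int.cast : ℤ → ZMod 16) h
  push_cast at h16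
  rw [halvingForm_odd_zmod_sixteen] at h16
  exact absurd h16 (by decide)

lemma halvingForm_ratCast_ne_zero {m : ℤ} (hm : Odd m) (x : ℚ) : halvingForm (m : ℚ) x 1 ≠ 0 := by
  intro h
  apply halvingForm_ne_zero hm (Int.odd_or_odd_of_isCoprime x.isCoprime_num_den)
  have hnum : ((halvingForm m x.num x.den : ℤ) : ℚ) = (x.den : ℚ) ^ 4 * halvingForm (m : ℚ) x 1 := by
    rw [Int.cast_halvingForm, ← x.den_mul_eq_num, ← halvingForm_smul, mul_one, Int.cast_natCast]
  rw [h, mul_zero] at hnum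
  exact_mod_cast hnum

instance Em.isShortNF (m : ℤ) : (Em m).IsShortNF := ⟨rfl, rfl, rfl⟩

lemma Em_addX_of_P_R {m : ℤ} (hm : (m : ℚ) ≠ 0) :
    (Em m).toAffine.addX 0 (-(m : ℚ) ^ 2) ((Em m).toAffine.slope 0 (-(m : ℚ) ^ 2) ((m : ℚ) ^ 3) m) =
      (2 * m ^ 4 - 2 * m ^ 2 + 1) / m ^ 2 := by
  rw [slope_of_X_ne (by simpa using hm)]
  simp only [addX, Em]
  field_simp
  ring

theorem Em_PR_nontrivial_mod_two_general
    (m : ℤ) (hodd : Odd m)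
    (hP : (Em m).toAffine.Nonsingular 0 ((m : ℚ) ^ 3))
    (hR : (Em m).toAffine.Nonsingular (-(m : ℚ) ^ 2) (m : ℚ)) :
    WeierstrassCurve.Affine.Point.some _ _ hP + WeierstrassCurve.Affine.Point.some _ _ hR ∉
      (doublingHom (Em m).toAffine.Point).range := by
  have hm0 : (m : ℚ) ≠ 0 := Int.cast_ne_zero.mpr (by rintro rfl; exact Int.not_odd_zero hodd)
  rintro ⟨Q, hQ⟩
  rw [add_of_X_ne (by simpa using hm0)] at hQ
  obtain ⟨x, hx⟩ := exists_doubling_quartic_root (Q := Q) hQ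
  rw [Em_addX_of_P_R hm0] at hx
  refine halvingForm_ratCast_ne_zero hodd x ?_
  simp only [Em] at hx
  unfold halvingForm
  field_simp at hx
  linear_combination -hx

/-- For `m > 1` odd and divisible by `3`, with `P = (0, m³)` and `R = (-m², m)` on
`E_m : y² = x³ - x + m⁶`, the point `P + R` does not lie in `2E_m(ℚ)`, i.e. `P + R` is
nontrivial in `E_m(ℚ)/2E_m(ℚ)`. -/
theorem Em_PR_nontrivial_mod_two
    (m : ℤ) (hm : 1 < m) (hodd : Odd m) (h3 : (3 : ℤ) ∣ m)
    (hP : (Em m).toAffine.Nonsingular 0 ((m : ℚ) ^ 3))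
    (hR : (Em m).toAffine.Nonsingular (-(m : ℚ) ^ 2) (m : ℚ)) :
    WeierstrassCurve.Affine.Point.some _ _ hP + WeierstrassCurve.Affine.Point.some _ _ hR ∉
      (doublingHom (Em m).toAffine.Point).range :=
  Em_PR_nontrivial_mod_two_general m hodd hP hR
end

section
/- Let m > 1 be an integer with 3 ∤ m, and let E'_m be the elliptic curve over ℚ defined by y² = x³ + x - m⁶. Let A and B be rational points on E'_m, and suppose the x-coordinate of A equals a^i, where a > 1 is an integer not divisible by 3 and i is an even positive integer. Then A ≠ 2B. -/
/-!
If `A = 2B` with `B = (x₀, y₀)`, the duplication formula gives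
`4 (x₀³ + x₀ - m⁶) x(A) = x₀⁴ - 2x₀² + 8m⁶x₀ + 1`. For `x(A) = aⁱ` an integer this is a monic
quartic equation for `x₀` over `ℤ`, so `x₀` is an integer. Reducing modulo `3`, where
`aⁱ ≡ m⁶ ≡ 1` because `i` is even and `3 ∤ am`, the quartic has no root.
-/

/-- The elliptic curve `E'_m : y² = x³ + x - m⁶` over `ℚ`. -/
def Em' (m : ℤ) : WeierstrassCurve ℚ := ⟨0, 0, 0, 1, -(m : ℚ) ^ 6⟩

open Polynomial

namespace WeierstrassCurve.Affine.Point

variable {F : Type*} [Field F] [DecidableEq F] {W : WeierstrassCurve F} [W.IsShortNF]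

theorem four_mul_mul_x_eq_of_some_eq_two_smul {x y x₀ y₀ : F} {h : W.toAffine.Nonsingular x y}
    {h₀ : W.toAffine.Nonsingular x₀ y₀} (hdbl : some x y h = 2 • some x₀ y₀ h₀) :
    4 * (x₀ ^ 3 + W.a₄ * x₀ + W.a₆) * x =
      x₀ ^ 4 - 2 * W.a₄ * x₀ ^ 2 - 8 * W.a₆ * x₀ + W.a₄ ^ 2 := by
  have hnegY : W.toAffine.negY x₀ y₀ = -y₀ := by simp [negY]
  have hy : y₀ ≠ W.toAffine.negY x₀ y₀ := fun hy ↦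
    some_ne_zero h (by rw [hdbl, two_smul, add_self_of_Y_eq hy])
  rw [two_smul, add_self_of_Y_ne hy, some.injEq] at hdbl
  have hcurve : y₀ ^ 2 = x₀ ^ 3 + W.a₄ * x₀ + W.a₆ := by
    simpa [W.a₁_of_isShortNF, W.a₃_of_isShortNF] using (equation_iff x₀ y₀).mp h₀.1
  have hslope : W.toAffine.slope x₀ x₀ y₀ y₀ * (2 * y₀) = 3 * x₀ ^ 2 + W.a₄ := by
    rw [slope_of_Y_ne rfl hy, hnegY, div_mul_eq_mul_div, div_eq_iff (sub_ne_zero.mpr (hnegY ▸ hy)),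
      W.a₁_of_isShortNF, W.a₂_of_isShortNF]
    ring
  rw [hdbl.1, addX, W.a₁_of_isShortNF, W.a₂_of_isShortNF]
  linear_combination (2 * y₀ * W.toAffine.slope x₀ x₀ y₀ y₀ + 3 * x₀ ^ 2 + W.a₄) * hslope -
    4 * W.toAffine.slope x₀ x₀ y₀ y₀ ^ 2 * hcurve

end WeierstrassCurve.Affine.Point

instance isShortNF_Em' (m : ℤ) : (Em' m).IsShortNF := ⟨rfl, rfl, rfl⟩

theorem exists_int_eq_of_four_mul_mul_eq {A B N : ℤ} {x₀ : ℚ}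
    (h : 4 * (x₀ ^ 3 + A * x₀ + B) * N = x₀ ^ 4 - 2 * A * x₀ ^ 2 - 8 * B * x₀ + A ^ 2) :
    ∃ n : ℤ, x₀ = n := by
  let p : ℤ[X] := X ^ 4 - C (4 * N) * X ^ 3 - C (2 * A) * X ^ 2 - C (4 * A * N + 8 * B) * X +
    C (A ^ 2 - 4 * B * N)
  have hp : p.Monic := by simp only [p]; monicity!
  have hroot : aeval x₀ p = 0 := by
    simp only [p, map_add, map_sub, map_mul, map_pow, aeval_X, eq_intCast, map_intCast]
    linear_combination -h
  obtain ⟨n, hn, -⟩ := exists_integer_of_is_root_of_monic hp hroot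
  exact ⟨n, hn⟩

theorem four_mul_mul_pow_ne_of_not_three_dvd {m a n : ℤ} (hm : ¬ 3 ∣ m) (ha : ¬ 3 ∣ a) {i : ℕ}
    (hi : Even i) : 4 * (n ^ 3 + n - m ^ 6) * a ^ i ≠ n ^ 4 - 2 * n ^ 2 + 8 * m ^ 6 * n + 1 := by
  have hsq {k : ℤ} (hk : ¬ 3 ∣ k) : (k : ZMod 3) ^ 2 = 1 :=
    ZMod.pow_card_sub_one_eq_one (by rwa [ne_eq, ZMod.intCast_zmod_eq_zero_iff_dvd])
  have hm6 : (m : ZMod 3) ^ 6 = 1 := by rw [show 6 = 2 * 3 from rfl, pow_mul, hsq hm, one_pow]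
  obtain ⟨j, rfl⟩ := hi
  intro h
  have h3 := congrArg (Int.cast : ℤ → ZMod 3) h
  push_cast at h3
  rw [← two_mul, pow_mul, hsq ha, one_pow, mul_one, hm6] at h3
  generalize (n : ZMod 3) = t at h3
  revert t
  decide

theorem Em'_even_power_x_not_double_general
    (m : ℤ) (h3 : ¬ (3 : ℤ) ∣ m)
    (a : ℤ) (ha3 : ¬ (3 : ℤ) ∣ a)
    (i : ℕ) (hi : Even i)
    (x y x₀ y₀ : ℚ) (hx : x = (a : ℚ) ^ i)
    (hA : (Em' m).toAffine.Nonsingular x y)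
    (hB : (Em' m).toAffine.Nonsingular x₀ y₀) :
    WeierstrassCurve.Affine.Point.some _ _ hA ≠ 2 • WeierstrassCurve.Affine.Point.some _ _ hB := by
  intro hdbl
  have hrel := WeierstrassCurve.Affine.Point.four_mul_mul_x_eq_of_some_eq_two_smul hdbl
  simp only [Em', hx] at hrel
  obtain ⟨n, rfl⟩ := exists_int_eq_of_four_mul_mul_eq (x₀ := x₀) (A := 1) (B := -m ^ 6) (N := a ^ i)
    (by push_cast; linear_combination hrel)
  refine four_mul_mul_pow_ne_of_not_three_dvd h3 ha3 hi (n := n) ?_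
  exact_mod_cast (by linear_combination hrel : (4 * ((n : ℚ) ^ 3 + n - m ^ 6) * a ^ i =
    n ^ 4 - 2 * n ^ 2 + 8 * m ^ 6 * n + 1))

/-- Let `m > 1` be an integer with `3 ∤ m`, and let `A`, `B` be rational points on
`E'_m : y² = x³ + x - m⁶`. If `x(A) = aⁱ` where `a > 1` is an integer with `3 ∤ a` and `i` is
an even positive integer, then `A ≠ 2B`. -/
theorem Em'_even_power_x_not_double
    (m : ℤ) (hm : 1 < m) (h3 : ¬ (3 : ℤ) ∣ m)
    (a : ℤ) (ha : 1 < a) (ha3 : ¬ (3 : ℤ) ∣ a)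
    (i : ℕ) (hi : Even i) (hipos : 0 < i)
    (x y x₀ y₀ : ℚ) (hx : x = (a : ℚ) ^ i)
    (hA : (Em' m).toAffine.Nonsingular x y)
    (hB : (Em' m).toAffine.Nonsingular x₀ y₀) :
    WeierstrassCurve.Affine.Point.some _ _ hA ≠ 2 • WeierstrassCurve.Affine.Point.some _ _ hB :=
  Em'_even_power_x_not_double_general m h3 a ha3 i hi x y x₀ y₀ hx hA hB
end

section
/- Let m > 1 be an integer with 3 ∤ m and m ≡ 2 (mod 4), let E'_m be the elliptic curve over ℚ defined by y² = x³ + x - m⁶, and let P' = (m², m) and Q' = (m⁶, m⁹) be rational points on E'_m. Then neither P' nor Q' lies in 2E'_m(ℚ); i.e., both are nontrivial in E'_m(ℚ)/2E'_m(ℚ). -/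
open Polynomial WeierstrassCurve.Affine

namespace WeierstrassCurve

section Field
variable {F : Type*} [Field F] [DecidableEq F] (W : WeierstrassCurve F)

theorem addX_slope_self_mul_eval_Ψ₂Sq {x y : F} (h : W.toAffine.Equation x y)
    (hy : y ≠ W.toAffine.negY x y) :
    W.toAffine.addX x x (W.toAffine.slope x x y y) * W.Ψ₂Sq.eval x = (W.Φ 2).eval x := by
  have hd : y - W.toAffine.negY x y ≠ 0 := sub_ne_zero.mpr hy
  rw [equation_iff] at h
  have hΨ : W.Ψ₂Sq.eval x = (y - W.toAffine.negY x y) ^ 2 := by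
    simp only [Ψ₂Sq, negY, b₂, b₄, b₆, eval_add, eval_mul, eval_C, eval_pow, eval_X]
    linear_combination (-4) * h
  rw [hΨ, slope_of_Y_ne rfl hy, Φ_two, addX]
  field_simp
  simp only [negY, b₄, b₆, b₈, eval_sub, eval_mul, eval_C, eval_pow, eval_X]
  linear_combination (-(8 * x + 4 * W.a₂ + W.a₁ ^ 2)) * h

theorem exists_mul_eval_Ψ₂Sq_eq_eval_Φ_two_of_mem_range {X Y : F}
    {hXY : W.toAffine.Nonsingular X Y}
    (h : Point.some X Y hXY ∈ (doublingHom W.toAffine.Point).range) :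
    ∃ x, X * W.Ψ₂Sq.eval x = (W.Φ 2).eval x := by
  obtain ⟨R, hR⟩ := h
  change R + R = _ at hR
  rcases R with _ | @⟨x, y, hxy⟩
  · exact absurd hR.symm (Point.some_ne_zero hXY)
  by_cases hy : y = W.toAffine.negY x y
  · rw [Point.add_self_of_Y_eq hy] at hR
    exact absurd hR.symm (Point.some_ne_zero hXY)
  rw [Point.add_self_of_Y_ne hy, Point.some.injEq] at hR
  exact ⟨x, hR.1 ▸ W.addX_slope_self_mul_eval_Ψ₂Sq hxy.1 hy⟩

end Field

theorem exists_int_mul_eval_Ψ₂Sq_eq_eval_Φ_two (W : WeierstrassCurve ℤ) (n : ℤ) {x : ℚ}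
    (h : n * (W.baseChange ℚ).Ψ₂Sq.eval x = ((W.baseChange ℚ).Φ 2).eval x) :
    ∃ k : ℤ, n * W.Ψ₂Sq.eval k = (W.Φ 2).eval k := by
  have hmonic : (W.Φ 2 - C n * W.Ψ₂Sq).Monic := by
    refine Monic.sub_of_left (W.leadingCoeff_Φ 2) (degree_lt_degree ?_)
    rw [natDegree_Φ]
    exact (natDegree_C_mul_le _ _).trans_lt (W.natDegree_Ψ₂Sq_le.trans_lt (by norm_num))
  rw [baseChange, map_Φ, map_Ψ₂Sq, eval_map_algebraMap, eval_map_algebraMap] at h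
  have hroot : aeval x (W.Φ 2 - C n * W.Ψ₂Sq) = 0 := by
    rw [map_sub, map_mul, aeval_C, algebraMap_int_eq, eq_intCast, h, sub_self]
  obtain ⟨k, rfl, -⟩ := exists_integer_of_is_root_of_monic hmonic hroot
  rw [aeval_algebraMap_apply, aeval_algebraMap_apply] at h
  exact ⟨k, Int.cast_injective (α := ℚ) (by simpa using h)⟩

end WeierstrassCurve

open WeierstrassCurve

def Em'Int (m : ℤ) : WeierstrassCurve ℤ := ⟨0, 0, 0, 1, -m ^ 6⟩

namespace Em'Int

theorem baseChange_rat (m : ℤ) : (Em'Int m).baseChange ℚ = Em' m := by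
  ext <;> simp [Em'Int, Em', WeierstrassCurve.baseChange, WeierstrassCurve.map]

theorem eval_Φ_two (m k : ℤ) : ((Em'Int m).Φ 2).eval k = (k ^ 2 - 1) ^ 2 + 8 * m ^ 6 * k := by
  simp only [Φ_two, eval_sub, eval_mul, eval_pow, eval_C, eval_X, b₄, b₆, b₈, Em'Int]
  ring

theorem eval_Ψ₂Sq (m k : ℤ) : (Em'Int m).Ψ₂Sq.eval k = 4 * (k ^ 3 + k - m ^ 6) := by
  simp only [Ψ₂Sq, eval_add, eval_mul, eval_pow, eval_C, eval_X, b₂, b₄, b₆, Em'Int]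
  ring

-- For odd `k` the right-hand side is `0` and the left-hand side `32` modulo `64`;
-- for even `k` the two sides differ in parity.
set_option maxRecDepth 100000 in
theorem sq_mul_eval_Ψ₂Sq_ne {m : ℤ} (hm : m % 4 = 2) (k : ℤ) :
    m ^ 2 * (Em'Int m).Ψ₂Sq.eval k ≠ ((Em'Int m).Φ 2).eval k := by
  have hmod : ∀ q k : ZMod 64,
      (4 * q + 2) ^ 2 * (4 * (k ^ 3 + k - (4 * q + 2) ^ 6)) ≠
        (k ^ 2 - 1) ^ 2 + 8 * (4 * q + 2) ^ 6 * k := by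
    decide
  obtain ⟨q, rfl⟩ : ∃ q, m = 4 * q + 2 := ⟨m / 4, by omega⟩
  rw [eval_Ψ₂Sq, eval_Φ_two]
  intro h
  exact hmod q k (by simpa using congrArg (Int.cast : ℤ → ZMod 64) h)

theorem pow_six_mul_eval_Ψ₂Sq_ne {m : ℤ} (hm : m ≠ 0) (k : ℤ) :
    m ^ 6 * (Em'Int m).Ψ₂Sq.eval k ≠ ((Em'Int m).Φ 2).eval k := by
  rw [eval_Ψ₂Sq, eval_Φ_two]
  intro h
  have hsq : (k ^ 2 - 1 - 2 * m ^ 6 * k) ^ 2 = (2 * m ^ 6) ^ 2 * (k ^ 2 - 1) := by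
    linear_combination -h
  obtain ⟨t, ht⟩ : 2 * m ^ 6 ∣ k ^ 2 - 1 - 2 * m ^ 6 * k :=
    (Int.pow_dvd_pow_iff two_ne_zero).mp ⟨_, hsq⟩
  have hkt : (k - t) * (k + t) = 1 := by
    refine mul_left_cancel₀ (by positivity : (2 * m ^ 6) ^ 2 ≠ 0) ?_
    linear_combination -hsq + (k ^ 2 - 1 - 2 * m ^ 6 * k + 2 * m ^ 6 * t) * ht
  obtain ⟨rfl | rfl, rfl⟩ : (k = 1 ∨ k = -1) ∧ t = 0 := by
    rcases Int.eq_one_or_neg_one_of_mul_eq_one' hkt with ⟨h1, h2⟩ | ⟨h1, h2⟩ <;> omega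
  all_goals exact pow_ne_zero 6 hm (by linarith)

end Em'Int

theorem Em'.some_notMem_range_doublingHom {m n : ℤ} {X Y : ℚ} (hX : X = n)
    (hXY : (Em' m).toAffine.Nonsingular X Y)
    (hn : ∀ k : ℤ, n * (Em'Int m).Ψ₂Sq.eval k ≠ ((Em'Int m).Φ 2).eval k) :
    Point.some X Y hXY ∉ (doublingHom (Em' m).toAffine.Point).range := by
  intro h
  obtain ⟨x, hx⟩ := (Em' m).exists_mul_eval_Ψ₂Sq_eq_eval_Φ_two_of_mem_range h
  rw [hX, ← Em'Int.baseChange_rat] at hx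
  obtain ⟨k, hk⟩ := (Em'Int m).exists_int_mul_eval_Ψ₂Sq_eq_eval_Φ_two n hx
  exact hn k hk

theorem Em'_P_Q_nontrivial_mod_two_general
    (m : ℤ) (hm : 1 < m) (h4 : m % 4 = 2)
    (hP : (Em' m).toAffine.Nonsingular ((m : ℚ) ^ 2) (m : ℚ))
    (hQ : (Em' m).toAffine.Nonsingular ((m : ℚ) ^ 6) ((m : ℚ) ^ 9)) :
    WeierstrassCurve.Affine.Point.some _ _ hP ∉ (doublingHom (Em' m).toAffine.Point).range ∧
      WeierstrassCurve.Affine.Point.some _ _ hQ ∉ (doublingHom (Em' m).toAffine.Point).range :=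
  ⟨Em'.some_notMem_range_doublingHom (n := m ^ 2) (Int.cast_pow m 2).symm hP
      (Em'Int.sq_mul_eval_Ψ₂Sq_ne h4),
    Em'.some_notMem_range_doublingHom (n := m ^ 6) (Int.cast_pow m 6).symm hQ
      (Em'Int.pow_six_mul_eval_Ψ₂Sq_ne (zero_lt_one.trans hm).ne')⟩

/-- For `m > 1` with `3 ∤ m` and `m ≡ 2 (mod 4)`, neither `P' = (m², m)` nor `Q' = (m⁶, m⁹)`
on `E'_m : y² = x³ + x - m⁶` lies in `2E'_m(ℚ)`, i.e. both are nontrivial in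
`E'_m(ℚ)/2E'_m(ℚ)`. -/
theorem Em'_P_Q_nontrivial_mod_two
    (m : ℤ) (hm : 1 < m) (h3 : ¬ (3 : ℤ) ∣ m) (h4 : m % 4 = 2)
    (hP : (Em' m).toAffine.Nonsingular ((m : ℚ) ^ 2) (m : ℚ))
    (hQ : (Em' m).toAffine.Nonsingular ((m : ℚ) ^ 6) ((m : ℚ) ^ 9)) :
    WeierstrassCurve.Affine.Point.some _ _ hP ∉ (doublingHom (Em' m).toAffine.Point).range ∧
      WeierstrassCurve.Affine.Point.some _ _ hQ ∉ (doublingHom (Em' m).toAffine.Point).range :=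
  Em'_P_Q_nontrivial_mod_two_general m hm h4 hP hQ
end

section
/- Let m > 1 be an integer with m ≡ 2 (mod 4), let E'_m be the elliptic curve over ℚ defined by y² = x³ + x - m⁶, and let P' = (m², m) and Q' = (m⁶, m⁹) be rational points on E'_m. Then the point P' + Q', whose affine coordinates are ((m⁴ + 1)/m², (-2m⁴ - 1)/m³), does not lie in 2E'_m(ℚ); i.e., P' + Q' is nontrivial in E'_m(ℚ)/2E'_m(ℚ). -/
/-!
If `P' + Q' = 2T` with `T = (x, y)`, then the `x`-coordinate `(m⁴ + 1)/m²` of `P' + Q'` equals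
the duplication value `(x⁴ - 2x² + 8m⁶x + 1)/(4y²)`. Since `m ≡ 2 (mod 4)`, the former has
2-adic absolute value exactly `4`. But on any curve `y² = x³ + x + b` over `ℚ₂` with
`|b|₂ < 1/2` the duplication value has absolute value `> 4`: it is `4|x|₂` if `|x|₂ > 1` and
`4/|y|₂²` with `|y|₂ < 1` if `|x|₂ < 1`, while `|x|₂ = 1` cannot occur, since a 2-adic unit `x`
satisfies `|x² + 1|₂ = 1/2`, which would force `|y|₂² = 1/2`.
-/

namespace IsUltrametricDist

variable {S : Type*} [SeminormedAddGroup S] [IsUltrametricDist S]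

lemma norm_add_eq_left_of_lt {x y : S} (h : ‖y‖ < ‖x‖) : ‖x + y‖ = ‖x‖ := by
  rw [norm_add_eq_max_of_norm_ne_norm h.ne', max_eq_left h.le]

lemma norm_add_lt_of_lt {x y : S} {r : ℝ} (hx : ‖x‖ < r) (hy : ‖y‖ < r) : ‖x + y‖ < r :=
  (norm_add_le_max x y).trans_lt (max_lt hx hy)

end IsUltrametricDist

open IsUltrametricDist

/-- The `x`-coordinate of `2 • (x, y)` on the curve `y² = x³ + a x + b`. -/
def doubleX {K : Type*} [Field K] (a b x y : K) : K :=
  (x ^ 4 - 2 * a * x ^ 2 - 8 * b * x + a ^ 2) / (4 * y ^ 2)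

lemma map_doubleX {K L : Type*} [Field K] [Field L] (f : K →+* L) (a b x y : K) :
    f (doubleX a b x y) = doubleX (f a) (f b) (f x) (f y) := by
  simp [doubleX, map_div₀, map_ofNat]

lemma PadicInt.norm_two : ‖(2 : ℤ_[2])‖ = 2⁻¹ := by
  simpa using PadicInt.norm_p (p := 2)

lemma PadicInt.norm_sq_add_one_of_isUnit {u : ℤ_[2]} (hu : IsUnit u) : ‖u ^ 2 + 1‖ = 2⁻¹ := by
  obtain ⟨n, hn2, hn⟩ := PadicInt.exists_mem_range u
  rw [PadicInt.maximalIdeal_eq_span_p, Ideal.mem_span_singleton] at hn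
  interval_cases n
  · rw [Nat.cast_zero, sub_zero] at hn
    exact absurd (isUnit_of_dvd_unit hn hu) (by norm_num [PadicInt.isUnit_iff, norm_two])
  obtain ⟨z, hz⟩ := hn
  have hunit : ‖1 + 2 * (z + z ^ 2)‖ = 1 := by
    rw [norm_add_eq_left_of_lt] <;> rw [norm_one]
    calc ‖2 * (z + z ^ 2)‖ ≤ 2⁻¹ * 1 := by
          rw [norm_mul, norm_two]; gcongr; exact (z + z ^ 2).norm_le_one
      _ < 1 := by norm_num
  rw [show u ^ 2 + 1 = 2 * (1 + 2 * (z + z ^ 2)) by linear_combination (u + 1 + 2 * z) * hz,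
    norm_mul, hunit, norm_two, mul_one]

namespace Padic

lemma norm_two : ‖(2 : ℚ_[2])‖ = 2⁻¹ := by
  simpa using Padic.norm_p (p := 2)

lemma norm_four : ‖(4 : ℚ_[2])‖ = 4⁻¹ := by
  rw [show (4 : ℚ_[2]) = 2 ^ 2 by norm_num, norm_pow, norm_two]; norm_num

lemma norm_eight : ‖(8 : ℚ_[2])‖ = 8⁻¹ := by
  rw [show (8 : ℚ_[2]) = 2 ^ 3 by norm_num, norm_pow, norm_two]; norm_num

lemma norm_intCast_le_inv_two_of_even {m : ℤ} (hm : Even m) : ‖(m : ℚ_[2])‖ ≤ 2⁻¹ := by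
  obtain ⟨k, rfl⟩ := hm
  rw [← two_mul, Int.cast_mul, Int.cast_two, norm_mul, norm_two]
  exact mul_le_of_le_one_right (by norm_num) (norm_int_le_one k)

lemma norm_intCast_of_emod_four_eq_two {m : ℤ} (hm : m % 4 = 2) : ‖(m : ℚ_[2])‖ = 2⁻¹ := by
  obtain ⟨k, rfl⟩ : ∃ k, m = 2 * k := ⟨m / 2, by omega⟩
  have hk : ‖(k : ℚ_[2])‖ = 1 :=
    le_antisymm (norm_int_le_one k) (not_lt.mp fun h ↦ by
      have := norm_intCast_lt_one_iff.mp h; omega)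
  push_cast
  rw [norm_mul, norm_two, hk, mul_one]

lemma norm_sq_add_one_of_norm_eq_one {x : ℚ_[2]} (hx : ‖x‖ = 1) : ‖x ^ 2 + 1‖ = 2⁻¹ := by
  set u : ℤ_[2] := ⟨x, hx.le⟩
  have : x ^ 2 + 1 = ((u ^ 2 + 1 : ℤ_[2]) : ℚ_[2]) := by push_cast; rfl
  rw [this, ← PadicInt.norm_def, PadicInt.norm_sq_add_one_of_isUnit (PadicInt.isUnit_iff.mpr hx)]

lemma norm_sq_ne_inv_two (y : ℚ_[2]) : ‖y‖ ^ 2 ≠ 2⁻¹ := by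
  rcases eq_or_ne y 0 with rfl | hy
  · norm_num
  rw [norm_eq_zpow_neg_valuation hy, ← zpow_natCast, ← zpow_mul, ← zpow_neg_one]
  push_cast
  rw [Ne, zpow_right_inj₀ (by norm_num) (by norm_num)]
  omega

variable {b x y : ℚ_[2]}

lemma norm_ne_one_of_sq_eq_cubic (hb : ‖b‖ < 2⁻¹) (heq : y ^ 2 = x ^ 3 + x + b) : ‖x‖ ≠ 1 := by
  intro hx
  have hdom : ‖x * (x ^ 2 + 1)‖ = 2⁻¹ := by
    rw [norm_mul, hx, norm_sq_add_one_of_norm_eq_one hx, one_mul]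
  apply norm_sq_ne_inv_two y
  rw [← norm_pow, heq, show x ^ 3 + x + b = x * (x ^ 2 + 1) + b by ring,
    norm_add_eq_left_of_lt (hdom ▸ hb), hdom]

lemma four_lt_norm_doubleX_of_norm_lt_one (hb : ‖b‖ < 2⁻¹) (heq : y ^ 2 = x ^ 3 + x + b)
    (hy : y ≠ 0) (hx : ‖x‖ < 1) : 4 < ‖doubleX 1 b x y‖ := by
  have hb1 : ‖b‖ < 1 := hb.trans (by norm_num)
  have hy2 : ‖y‖ ^ 2 < 1 := by
    rw [← norm_pow, heq]
    refine norm_add_lt_of_lt (norm_add_lt_of_lt ?_ hx) hb1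
    rw [norm_pow]; exact pow_lt_one₀ (norm_nonneg _) hx (by norm_num)
  have hnum : ‖x ^ 4 - 2 * 1 * x ^ 2 - 8 * b * x + 1 ^ 2‖ = 1 := by
    rw [show x ^ 4 - 2 * 1 * x ^ 2 - 8 * b * x + 1 ^ 2 = 1 + x * (x ^ 3 + (-2) * x + (-8) * b)
      by ring, norm_add_eq_left_of_lt, norm_one]
    have hint : ‖x ^ 3 + (-2) * x + (-8) * b‖ ≤ 1 := by
      refine (norm_add_le_max _ _).trans (max_le ((norm_add_le_max _ _).trans (max_le ?_ ?_)) ?_)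
      · rw [norm_pow]; exact pow_le_one₀ (norm_nonneg _) hx.le
      · rw [norm_mul, norm_neg, norm_two]; linarith
      · rw [norm_mul, norm_neg, norm_eight]; linarith
    rw [norm_one, norm_mul]
    nlinarith [norm_nonneg x]
  have hy0 : 0 < ‖y‖ := norm_pos_iff.mpr hy
  rw [doubleX, norm_div, hnum, norm_mul, norm_four, norm_pow, lt_div_iff₀ (by positivity)]
  nlinarith

lemma four_lt_norm_doubleX_of_one_lt_norm (hb : ‖b‖ < 2⁻¹) (heq : y ^ 2 = x ^ 3 + x + b)
    (hx : 1 < ‖x‖) : 4 < ‖doubleX 1 b x y‖ := by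
  have hb1 : ‖b‖ < 1 := hb.trans (by norm_num)
  have hx3 : 1 < ‖x‖ ^ 3 := one_lt_pow₀ hx (by norm_num)
  have hy2 : ‖y‖ ^ 2 = ‖x‖ ^ 3 := by
    rw [← norm_pow, heq, add_assoc, norm_add_eq_left_of_lt, norm_pow]
    rw [norm_pow]
    exact (norm_add_le_max _ _).trans_lt (max_lt (lt_self_pow₀ hx (by norm_num)) (hb1.trans hx3))
  have hnum : ‖x ^ 4 - 2 * 1 * x ^ 2 - 8 * b * x + 1 ^ 2‖ = ‖x‖ ^ 4 := by
    rw [show x ^ 4 - 2 * 1 * x ^ 2 - 8 * b * x + 1 ^ 2 = x ^ 4 + ((-2) * x ^ 2 + (-8) * b * x + 1)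
      by ring, norm_add_eq_left_of_lt, norm_pow]
    rw [norm_pow]
    refine (norm_add_le_max _ _).trans_lt
      (max_lt ((norm_add_le_max _ _).trans_lt (max_lt ?_ ?_)) ?_)
    · rw [norm_mul, norm_neg, norm_two, norm_pow]; nlinarith
    · rw [norm_mul, norm_mul, norm_neg, norm_eight]; nlinarith [norm_nonneg b]
    · rw [norm_one]; nlinarith
  rw [doubleX, norm_div, hnum, norm_mul, norm_four, norm_pow, hy2, lt_div_iff₀ (by positivity)]
  nlinarith

theorem four_lt_norm_doubleX (hb : ‖b‖ < 2⁻¹) (heq : y ^ 2 = x ^ 3 + x + b) (hy : y ≠ 0) :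
    4 < ‖doubleX 1 b x y‖ := by
  rcases lt_trichotomy ‖x‖ 1 with hx | hx | hx
  · exact four_lt_norm_doubleX_of_norm_lt_one hb heq hy hx
  · exact absurd hx (norm_ne_one_of_sq_eq_cubic hb heq)
  · exact four_lt_norm_doubleX_of_one_lt_norm hb heq hx

end Padic

open WeierstrassCurve.Affine

namespace Em'

variable {m : ℤ}

lemma equation_iff {x y : ℚ} : (Em' m).toAffine.Equation x y ↔ y ^ 2 = x ^ 3 + x - m ^ 6 := by
  rw [WeierstrassCurve.Affine.equation_iff]
  simp [Em', sub_eq_add_neg]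

lemma negY_eq (x y : ℚ) : (Em' m).toAffine.negY x y = -y := by
  simp [Em', negY]

lemma addX_slope_self {x y : ℚ} (h : (Em' m).toAffine.Equation x y)
    (hy : y ≠ (Em' m).toAffine.negY x y) :
    (Em' m).toAffine.addX x x ((Em' m).toAffine.slope x x y y) = doubleX 1 (-(m : ℚ) ^ 6) x y := by
  have hy0 : y ≠ 0 := by rintro rfl; rw [negY_eq, neg_zero] at hy; exact hy rfl
  rw [slope_of_Y_ne rfl hy, negY_eq]
  simp only [addX, Em', WeierstrassCurve.toAffine, doubleX]
  field_simp
  linear_combination (-32 * x) * equation_iff.mp h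

lemma P_add_Q (hm : 1 < |m|) (hP : (Em' m).toAffine.Nonsingular ((m : ℚ) ^ 2) (m : ℚ))
    (hQ : (Em' m).toAffine.Nonsingular ((m : ℚ) ^ 6) ((m : ℚ) ^ 9))
    (hPQ : (Em' m).toAffine.Nonsingular (((m : ℚ) ^ 4 + 1) / (m : ℚ) ^ 2)
      ((-2 * (m : ℚ) ^ 4 - 1) / (m : ℚ) ^ 3)) :
    Point.some _ _ hP + Point.some _ _ hQ = Point.some _ _ hPQ := by
  have hm2 : (1 : ℚ) < (m : ℚ) ^ 2 := by exact_mod_cast one_lt_sq_iff_one_lt_abs m |>.mpr hm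
  have hm0 : (m : ℚ) ≠ 0 := by rintro h; rw [h] at hm2; norm_num at hm2
  have hx : (m : ℚ) ^ 2 ≠ (m : ℚ) ^ 6 := by
    rw [show (m : ℚ) ^ 6 = m ^ 2 * (m ^ 2) ^ 2 by ring]
    nlinarith [one_lt_pow₀ hm2 two_ne_zero]
  have hs : (Em' m).toAffine.slope ((m : ℚ) ^ 2) ((m : ℚ) ^ 6) m ((m : ℚ) ^ 9) =
      ((m : ℚ) ^ 4 + 1) / m := by
    rw [slope_of_X_ne hx, div_eq_div_iff (sub_ne_zero.mpr hx) hm0]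
    ring
  rw [Point.add_of_X_ne hx, Point.some.injEq]
  constructor <;> simp only [addY, negAddY, negY, addX, hs] <;>
    simp only [Em', WeierstrassCurve.toAffine] <;> field_simp <;> ring

theorem some_notMem_range_doublingHom_s14 (hm : Even m) {X Y : ℚ}
    (h : (Em' m).toAffine.Nonsingular X Y) (hX : ‖(X : ℚ_[2])‖ ≤ 4) :
    Point.some _ _ h ∉ (doublingHom (Em' m).toAffine.Point).range := by
  rintro ⟨T, hT⟩
  replace hT : T + T = Point.some _ _ h := by rw [← two_smul ℕ T]; exact hT
  cases T with
  | zero => exact Point.some_ne_zero h hT.symm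
  | some x y hxy =>
    by_cases hy : y = (Em' m).toAffine.negY x y
    · exact Point.some_ne_zero h ((Point.add_self_of_Y_eq hy).symm.trans hT).symm
    rw [Point.add_self_of_Y_ne hy, Point.some.injEq] at hT
    have hy0 : (y : ℚ_[2]) ≠ 0 := by
      rw [Rat.cast_ne_zero]; rintro rfl; rw [negY_eq, neg_zero] at hy; exact hy rfl
    have hb : ‖-(m : ℚ_[2]) ^ 6‖ < 2⁻¹ := by
      rw [norm_neg, norm_pow]
      calc ‖(m : ℚ_[2])‖ ^ 6 ≤ 2⁻¹ ^ 6 :=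
            pow_le_pow_left₀ (norm_nonneg _) (Padic.norm_intCast_le_inv_two_of_even hm) 6
        _ < 2⁻¹ := by norm_num
    have hcurve : (y : ℚ_[2]) ^ 2 = (x : ℚ_[2]) ^ 3 + x + -(m : ℚ_[2]) ^ 6 := by
      have := congrArg (Rat.cast : ℚ → ℚ_[2]) (equation_iff.mp hxy.1)
      push_cast at this
      linear_combination this
    have hdouble : (X : ℚ_[2]) = doubleX 1 (-(m : ℚ_[2]) ^ 6) x y := by
      rw [← hT.1, addX_slope_self hxy.1 hy, ← Rat.coe_castHom, map_doubleX]
      simp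
    exact (Padic.four_lt_norm_doubleX hb hcurve hy0).not_ge (hdouble ▸ hX)

end Em'

theorem Em'_PQ_nontrivial_mod_two_general
    (m : ℤ) (h4 : m % 4 = 2)
    (hP : (Em' m).toAffine.Nonsingular ((m : ℚ) ^ 2) (m : ℚ))
    (hQ : (Em' m).toAffine.Nonsingular ((m : ℚ) ^ 6) ((m : ℚ) ^ 9))
    (hPQ : (Em' m).toAffine.Nonsingular (((m : ℚ) ^ 4 + 1) / (m : ℚ) ^ 2)
      ((-2 * (m : ℚ) ^ 4 - 1) / (m : ℚ) ^ 3)) :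
    WeierstrassCurve.Affine.Point.some _ _ hP + WeierstrassCurve.Affine.Point.some _ _ hQ =
        WeierstrassCurve.Affine.Point.some _ _ hPQ ∧
      WeierstrassCurve.Affine.Point.some _ _ hP + WeierstrassCurve.Affine.Point.some _ _ hQ ∉
        (doublingHom (Em' m).toAffine.Point).range := by
  have hsum := Em'.P_add_Q (by rw [lt_abs]; omega) hP hQ hPQ
  refine ⟨hsum, hsum ▸ Em'.some_notMem_range_doublingHom_s14 (by rw [Int.even_iff]; omega) hPQ ?_⟩
  have hnorm := Padic.norm_intCast_of_emod_four_eq_two h4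
  have hnum : ‖(m : ℚ_[2]) ^ 4 + 1‖ = 1 := by
    rw [add_comm, norm_add_eq_left_of_lt, norm_one]
    rw [norm_one, norm_pow, hnorm]
    norm_num
  push_cast
  rw [norm_div, hnum, norm_pow, hnorm]
  norm_num

/-- For `m > 1` with `m ≡ 2 (mod 4)`, the point `P' + Q'` on `E'_m : y² = x³ + x - m⁶`, where
`P' = (m², m)` and `Q' = (m⁶, m⁹)`, has affine coordinates `((m⁴+1)/m², (-2m⁴-1)/m³)` and does
not lie in `2E'_m(ℚ)`, i.e. `P' + Q'` is nontrivial in `E'_m(ℚ)/2E'_m(ℚ)`. -/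
theorem Em'_PQ_nontrivial_mod_two
    (m : ℤ) (hm : 1 < m) (h4 : m % 4 = 2)
    (hP : (Em' m).toAffine.Nonsingular ((m : ℚ) ^ 2) (m : ℚ))
    (hQ : (Em' m).toAffine.Nonsingular ((m : ℚ) ^ 6) ((m : ℚ) ^ 9))
    (hPQ : (Em' m).toAffine.Nonsingular (((m : ℚ) ^ 4 + 1) / (m : ℚ) ^ 2)
      ((-2 * (m : ℚ) ^ 4 - 1) / (m : ℚ) ^ 3)) :
    WeierstrassCurve.Affine.Point.some _ _ hP + WeierstrassCurve.Affine.Point.some _ _ hQ =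
        WeierstrassCurve.Affine.Point.some _ _ hPQ ∧
      WeierstrassCurve.Affine.Point.some _ _ hP + WeierstrassCurve.Affine.Point.some _ _ hQ ∉
        (doublingHom (Em' m).toAffine.Point).range :=
  Em'_PQ_nontrivial_mod_two_general m h4 hP hQ hPQ
end

section
/- There is no pair of integers (m, a) with m ≠ 0 such that m⁶ = a·(a² + 1); in other words, the product a(a² + 1) is never a nonzero sixth power of an integer. -/
/-- There is no pair of integers `(m, a)` with `m ≠ 0` such that `m⁶ = a * (a² + 1)`; i.e.
`a * (a² + 1)` is never a nonzero sixth power of an integer. -/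
theorem no_nonzero_sixth_power_eq_a_mul_a_sq_add_one :
    ¬ ∃ m a : ℤ, m ≠ 0 ∧ m ^ 6 = a * (a ^ 2 + 1) := by
  rintro ⟨m, a, hm, heq⟩
  have hcop : IsCoprime (a ^ 2 + 1) a := by
    refine ⟨1, -a, by ring⟩
  have hmul : (a ^ 2 + 1) * a = (m ^ 3) ^ 2 := by linarith [heq]; 
  obtain ⟨b, hb⟩ := Int.sq_of_isCoprime hcop hmul
  have ha : a = 0 := by
    rcases hb with hb | hb
    · -- a^2 + 1 = b^2, consecutive integers squared
      have h1 : (b - a) * (b + a) = 1 := by nlinarith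
      rcases Int.eq_one_or_neg_one_of_mul_eq_one' h1 with ⟨u, v⟩ | ⟨u, v⟩ <;> omega
    · nlinarith [sq_nonneg a, sq_nonneg b]
  apply hm
  have : m ^ 6 = 0 := by rw [heq, ha]; ring
  exact pow_eq_zero_iff (by norm_num) |>.mp this
end
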